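/- arXiv:2303.12919 — 10 statements merged into one kernel-verified Lean document; each statement's English description precedes it below -/
import Mathlib

section
/- Let a, f : ℝ → ℝ be continuous and p-periodic with ∫₀ᵖ a = 0, and μ(t) = exp(∫₀ᵗ a). If ∫₀ᵖ μ(s) f(s) ds = 0, then every solution of x' + a(t)x = f(t) is p-periodic. -/
/-!
With `μ' = a μ`, the equation `x' + a x = f` becomes `(μ x)' = μ f`, so
`μ(t + p) x(t + p) - μ(t) x(t) = ∫ₜ^{t+p} μ f`. Because `a` has zero mean, its primitive, and hence
`μ`, is `p`-periodic; so is `μ f`, whose integral over any period therefore equals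
`∫₀ᵖ μ f = 0`. Cancelling `μ(t + p) = μ(t) > 0` gives `x(t + p) = x(t)`.
-/

open intervalIntegral

theorem Function.Periodic.primitive_of_integral_eq_zero {a : ℝ → ℝ} {p : ℝ}
    (hap : Function.Periodic a p) (h_int : ∀ t₁ t₂, IntervalIntegrable a MeasureTheory.volume t₁ t₂)
    (hina : ∫ s in (0:ℝ)..p, a s = 0) :
    Function.Periodic (fun t => ∫ s in (0:ℝ)..t, a s) p := fun t => by
  simp only [hap.intervalIntegral_add_eq_add 0 t h_int, zero_add, hina, add_zero]

theorem hasDerivAt_exp_primitive {a : ℝ → ℝ} (ha : Continuous a) (t : ℝ) :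
    HasDerivAt (fun t => Real.exp (∫ s in (0:ℝ)..t, a s))
      (a t * Real.exp (∫ s in (0:ℝ)..t, a s)) t := by
  have hprim : HasDerivAt (fun u => ∫ s in (0:ℝ)..u, a s) (a t) t :=
    integral_hasDerivAt_right (ha.intervalIntegrable _ _) (ha.stronglyMeasurableAtFilter _ _)
      ha.continuousAt
  simpa only [mul_comm] using hprim.exp

theorem integral_integratingFactor_mul_eq_sub {a f x μ : ℝ → ℝ} {u v : ℝ}
    (hμ : ∀ t ∈ Set.uIcc u v, HasDerivAt μ (a t * μ t) t)
    (hx : ∀ t ∈ Set.uIcc u v, HasDerivAt x (f t - a t * x t) t)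
    (hint : IntervalIntegrable (fun t => μ t * f t) MeasureTheory.volume u v) :
    ∫ t in u..v, μ t * f t = μ v * x v - μ u * x u :=
  integral_eq_sub_of_hasDerivAt
    (fun t ht => ((hμ t ht).mul (hx t ht)).congr_deriv (by ring)) hint

theorem stmt_2_general (p : ℝ) (a f : ℝ → ℝ) (ha : Continuous a) (hf : Continuous f)
    (hap : ∀ t, a (t + p) = a t) (hfp : ∀ t, f (t + p) = f t)
    (hina : ∫ s in (0:ℝ)..p, a s = 0)
    (μ : ℝ → ℝ) (hμ : ∀ t, μ t = Real.exp (∫ s in (0:ℝ)..t, a s))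
    (hortho : ∫ s in (0:ℝ)..p, μ s * f s = 0) :
    ∀ x : ℝ → ℝ, (∀ t, HasDerivAt x (f t - a t * x t) t) → ∀ t, x (t + p) = x t := by
  intro x hx t
  have ha_int : ∀ t₁ t₂, IntervalIntegrable a MeasureTheory.volume t₁ t₂ :=
    fun _ _ => ha.intervalIntegrable _ _
  have hμ_eq : μ = fun t => Real.exp (∫ s in (0:ℝ)..t, a s) := funext hμ
  have hμ_deriv : ∀ s, HasDerivAt μ (a s * μ s) s := by
    rw [hμ_eq]
    exact hasDerivAt_exp_primitive ha
  have hμ_per : Function.Periodic μ p := by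
    rw [hμ_eq]
    exact (Function.Periodic.primitive_of_integral_eq_zero hap ha_int hina).comp Real.exp
  have hμ_cont : Continuous μ := by
    rw [hμ_eq]
    exact (continuous_primitive ha_int 0).rexp
  have hjump : ∫ s in t..t + p, μ s * f s = μ (t + p) * x (t + p) - μ t * x t :=
    integral_integratingFactor_mul_eq_sub (fun s _ => hμ_deriv s) (fun s _ => hx s) ((hμ_cont.mul hf).intervalIntegrable _ _)
  have hμf_per : Function.Periodic (fun s => μ s * f s) p := hμ_per.mul hfp
  rw [hμf_per.intervalIntegral_add_eq t 0, zero_add, hortho, hμ_per t, eq_comm,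
    sub_eq_zero] at hjump
  exact mul_left_cancel₀ (hμ t ▸ Real.exp_pos _).ne' hjump

theorem stmt_2 (p : ℝ) (hp : 0 < p) (a f : ℝ → ℝ) (ha : Continuous a) (hf : Continuous f)
    (hap : ∀ t, a (t + p) = a t) (hfp : ∀ t, f (t + p) = f t)
    (hina : ∫ s in (0:ℝ)..p, a s = 0)
    (μ : ℝ → ℝ) (hμ : ∀ t, μ t = Real.exp (∫ s in (0:ℝ)..t, a s))
    (hortho : ∫ s in (0:ℝ)..p, μ s * f s = 0) :
    ∀ x : ℝ → ℝ, (∀ t, HasDerivAt x (f t - a t * x t) t) → ∀ t, x (t + p) = x t :=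
  stmt_2_general p a f ha hf hap hfp hina μ hμ hortho
end

section
/- Let M be a real n×n matrix with I - M singular, and b ∈ ℝⁿ not in the range of I - M. Then there exists a nonzero vector v₀ with Mᵀ v₀ = v₀ and ⟨b, v₀⟩ ≠ 0, and consequently for any x₀ ∈ ℝⁿ the sequence x_m = Mᵐ x₀ + Σ_{k=0}^{m-1} Mᵏ b satisfies ⟨x_m, v₀⟩ = ⟨x₀, v₀⟩ + m⟨b, v₀⟩, hence ‖x_m‖ → ∞ as m → ∞. -/
open Matrix Filter Bornology

/-! Since `b ∉ range (1 - M)`, duality gives a vector `v` orthogonal to `range (1 - M)` with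
`⟨b, v⟩ ≠ 0`; such a `v` is fixed by `Mᵀ`, so `⟨·, v⟩` is invariant under `M` and increases by
`⟨b, v⟩` at every step of `x ↦ M x + b`. The values of the Lipschitz functional `⟨·, v⟩` along the
orbit are thus unbounded, hence so are the orbit's norms. -/

theorem Matrix.exists_vecMul_eq_zero_dotProduct_ne_zero {K m n : Type*} [Field K] [Fintype m]
    [Fintype n] [DecidableEq m] {A : Matrix m n K} {b : m → K} (hb : b ∉ Set.range A.mulVec) :
    ∃ v : m → K, v ᵥ* A = 0 ∧ b ⬝ᵥ v ≠ 0 := by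
  have hb' : b ∉ LinearMap.range A.mulVecLin := by simpa using hb
  obtain ⟨f, hfb, hf⟩ := Submodule.exists_dual_map_eq_bot_of_notMem hb' inferInstance
  set v := (dotProductEquiv K m).symm f
  have hfv : ∀ x, f x = v ⬝ᵥ x := fun x => by
    rw [← dotProductEquiv_apply_apply K m v x, LinearEquiv.apply_symm_apply]
  refine ⟨v, ?_, by rwa [dotProduct_comm, ← hfv]⟩
  refine dotProduct_eq_zero_iff.1 fun x => ?_
  rw [← dotProduct_mulVec, ← hfv]
  exact (Submodule.mem_bot K).1 (hf ▸ Submodule.mem_map_of_mem (LinearMap.mem_range_self _ x))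

theorem Matrix.mulVec_dotProduct_of_vecMul_eq_self {R n : Type*} [CommSemiring R] [Fintype n]
    {A : Matrix n n R} {v : n → R} (hv : v ᵥ* A = v) (x : n → R) :
    (A *ᵥ x) ⬝ᵥ v = x ⬝ᵥ v := by
  rw [dotProduct_comm, dotProduct_mulVec, hv, dotProduct_comm]

theorem Matrix.vecMul_pow_eq_self {R n : Type*} [CommSemiring R] [Fintype n] [DecidableEq n]
    {M : Matrix n n R} {v : n → R} (hv : v ᵥ* M = v) (m : ℕ) : v ᵥ* M ^ m = v := by
  induction m with
  | zero => exact vecMul_one v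
  | succ m ih => rw [pow_succ, ← vecMul_vecMul, ih, hv]

theorem Matrix.pow_mulVec_add_geom_sum_mulVec_dotProduct {R n : Type*} [CommSemiring R]
    [Fintype n] [DecidableEq n] {M : Matrix n n R} {v : n → R} (hv : v ᵥ* M = v)
    (x b : n → R) (m : ℕ) :
    ((M ^ m) *ᵥ x + (∑ k ∈ Finset.range m, M ^ k) *ᵥ b) ⬝ᵥ v = x ⬝ᵥ v + m * (b ⬝ᵥ v) := by
  have hpow k y := mulVec_dotProduct_of_vecMul_eq_self (vecMul_pow_eq_self hv k) y
  simp [add_dotProduct, sum_mulVec, sum_dotProduct, hpow]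

theorem tendsto_const_add_natCast_mul_cobounded {𝕜 : Type*} [NormedField 𝕜]
    [NormSMulClass ℤ 𝕜] (c : 𝕜) {d : 𝕜} (hd : d ≠ 0) :
    Tendsto (fun m : ℕ => c + m * d) atTop (cobounded 𝕜) :=
  (tendsto_const_add_cobounded c).comp
    ((tendsto_mul_right_cobounded hd).comp tendsto_natCast_atTop_cobounded)

theorem stmt_4_general (n : ℕ) (M : Matrix (Fin n) (Fin n) ℝ) (b : Fin n → ℝ)
    (hb : b ∉ Set.range (fun x : Fin n → ℝ => ((1 : Matrix (Fin n) (Fin n) ℝ) - M) *ᵥ x)) :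
    ∃ v₀ : Fin n → ℝ, v₀ ≠ 0 ∧ Mᵀ *ᵥ v₀ = v₀ ∧ b ⬝ᵥ v₀ ≠ 0 ∧
      ∀ x₀ : Fin n → ℝ,
        (∀ m : ℕ, ((M ^ m) *ᵥ x₀ + (∑ k ∈ Finset.range m, M ^ k) *ᵥ b) ⬝ᵥ v₀
            = x₀ ⬝ᵥ v₀ + (m : ℝ) * (b ⬝ᵥ v₀)) ∧
        Tendsto (fun m : ℕ => ‖(M ^ m) *ᵥ x₀ + (∑ k ∈ Finset.range m, M ^ k) *ᵥ b‖)
          atTop atTop := by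
  obtain ⟨v, hv, hbv⟩ := exists_vecMul_eq_zero_dotProduct_ne_zero hb
  have hvM : v ᵥ* M = v := by
    rwa [vecMul_sub, vecMul_one, sub_eq_zero, eq_comm] at hv
  have horbit := pow_mulVec_add_geom_sum_mulVec_dotProduct hvM
  refine ⟨v, fun h => hbv (by simp [h]), by rwa [mulVec_transpose], hbv,
    fun x₀ => ⟨horbit x₀ b, ?_⟩⟩
  let φ : (Fin n → ℝ) →L[ℝ] ℝ :=
    LinearMap.toContinuousLinearMap (dotProductEquiv ℝ (Fin n) v)
  rw [tendsto_norm_atTop_iff_cobounded]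
  refine (tendsto_comap_iff.2 ?_).mono_right φ.lipschitz.comap_cobounded_le
  convert tendsto_const_add_natCast_mul_cobounded (x₀ ⬝ᵥ v) hbv using 2 with m
  exact (dotProduct_comm _ _).trans (horbit x₀ b m)

theorem stmt_4 (n : ℕ) (M : Matrix (Fin n) (Fin n) ℝ) (b : Fin n → ℝ)
    (hsing : ¬ IsUnit ((1 : Matrix (Fin n) (Fin n) ℝ) - M).det)
    (hb : b ∉ Set.range (fun x : Fin n → ℝ => ((1 : Matrix (Fin n) (Fin n) ℝ) - M) *ᵥ x)) :
    ∃ v₀ : Fin n → ℝ, v₀ ≠ 0 ∧ Mᵀ *ᵥ v₀ = v₀ ∧ b ⬝ᵥ v₀ ≠ 0 ∧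
      ∀ x₀ : Fin n → ℝ,
        (∀ m : ℕ, ((M ^ m) *ᵥ x₀ + (∑ k ∈ Finset.range m, M ^ k) *ᵥ b) ⬝ᵥ v₀
            = x₀ ⬝ᵥ v₀ + (m : ℝ) * (b ⬝ᵥ v₀)) ∧
        Tendsto (fun m : ℕ => ‖(M ^ m) *ᵥ x₀ + (∑ k ∈ Finset.range m, M ^ k) *ᵥ b‖)
          atTop atTop :=
  stmt_4_general n M b hb
end

section
/- Let M be a real n×n matrix that is diagonalizable over ℂ, all of whose eigenvalues λ satisfy |λ| ≤ 1, and with λ = 1 the only eigenvalue on the unit circle. If b ∈ ℝⁿ lies in the range of I - M, then for every x₀ ∈ ℝⁿ, the sequence x_m = Mᵐ x₀ + Σ_{k=0}^{m-1} Mᵏ b converges as m → ∞ to a vector of the form x̄₀ + y, where (I - M)x̄₀ = b and My = y. -/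
/-!
Since `M = P D P⁻¹` over `ℂ`, the powers `Mᵐ = P Dᵐ P⁻¹` converge: every diagonal entry of `D` is
an eigenvalue, hence is either `1` or of modulus `< 1`. Their real parts show that the real powers
`Mᵐ` converge to some `Q`, and `M Q = Q`. Writing `b = (I - M) x̄₀`, the geometric sum telescopes to
`x_m = x̄₀ + Mᵐ (x₀ - x̄₀)`, which converges to `x̄₀ + Q (x₀ - x̄₀)`.
-/

open Matrix Filter Polynomial Topology

theorem exists_tendsto_pow_of_norm_le_one {R : Type*} [SeminormedRing R] {z : R}
    (hle : ‖z‖ ≤ 1) (hone : ‖z‖ = 1 → z = 1) : ∃ l, Tendsto (fun m : ℕ => z ^ m) atTop (𝓝 l) := by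
  rcases hle.lt_or_eq with hlt | heq
  · exact ⟨0, tendsto_pow_atTop_nhds_zero_of_norm_lt_one hlt⟩
  · exact ⟨1, by simpa only [hone heq, one_pow] using tendsto_const_nhds⟩

theorem mul_eq_of_tendsto_pow {M : Type*} [Monoid M] [TopologicalSpace M] [ContinuousMul M]
    [T2Space M] {a q : M} (h : Tendsto (fun m : ℕ => a ^ m) atTop (𝓝 q)) : a * q = q := by
  have hshift : Tendsto (fun m : ℕ => a * a ^ m) atTop (𝓝 q) := by
    simpa only [← pow_succ'] using (tendsto_add_atTop_iff_nat 1).mpr h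
  exact tendsto_nhds_unique ((continuous_const_mul a).tendsto q |>.comp h) hshift

namespace Matrix

variable {n R : Type*} [Fintype n] [DecidableEq n]

theorem isRoot_charpoly_of_eq_conj_diagonal [CommRing R] {A P : Matrix n n R} {D : n → R}
    (hP : IsUnit P.det) (hA : A = P * diagonal D * P⁻¹) (i : n) :
    A.charpoly.IsRoot (D i) := by
  have hchar : A.charpoly = ∏ j, (X - C (D j)) := by
    rw [hA, ← charpoly_diagonal]
    exact charpoly_units_conj (nonsingInvUnit P hP) (diagonal D)
  rw [hchar, IsRoot, eval_prod]
  exact Finset.prod_eq_zero (Finset.mem_univ i) (by simp)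

theorem exists_tendsto_pow_of_eq_conj_diagonal [CommRing R] [TopologicalSpace R]
    [IsTopologicalRing R] {A P : Matrix n n R} {D : n → R}
    (hP : IsUnit P.det) (hA : A = P * diagonal D * P⁻¹)
    (hD : ∀ i, ∃ l, Tendsto (fun m : ℕ => D i ^ m) atTop (𝓝 l)) :
    ∃ Q, Tendsto (fun m : ℕ => A ^ m) atTop (𝓝 Q) := by
  choose l hl using hD
  have hpow : ∀ m : ℕ, A ^ m = P * diagonal (D ^ m) * P⁻¹ := fun m => by
    rw [hA, ← diagonal_pow]
    exact Units.conj_pow (nonsingInvUnit P hP) (diagonal D) m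
  have hconj : Continuous fun d : n → R => P * diagonal d * P⁻¹ :=
    (continuous_const.matrix_mul continuous_id.matrix_diagonal).matrix_mul continuous_const
  exact ⟨P * diagonal l * P⁻¹,
    ((hconj.tendsto l).comp (tendsto_pi_nhds.mpr hl)).congr fun m => (hpow m).symm⟩

theorem exists_tendsto_pow_of_exists_tendsto_pow_map {𝕜 : Type*} [RCLike 𝕜] {M : Matrix n n ℝ}
    (h : ∃ Q, Tendsto (fun m : ℕ => M.map (algebraMap ℝ 𝕜) ^ m) atTop (𝓝 Q)) :
    ∃ Q, Tendsto (fun m : ℕ => M ^ m) atTop (𝓝 Q) := by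
  obtain ⟨Q, hQ⟩ := h
  have hre : ∀ m : ℕ, (M.map (algebraMap ℝ 𝕜) ^ m).map RCLike.re = M ^ m := fun m => by
    rw [← (algebraMap ℝ 𝕜).mapMatrix_apply, ← map_pow]
    ext i j
    simp
  exact ⟨Q.map RCLike.re,
    (((continuous_id.matrix_map RCLike.continuous_re).tendsto Q).comp hQ).congr hre⟩

theorem pow_mulVec_add_geom_sum_mulVec [Ring R] (M : Matrix n n R) (m : ℕ) (x₀ xbar : n → R) :
    (M ^ m) *ᵥ x₀ + (∑ k ∈ Finset.range m, M ^ k) *ᵥ ((1 - M) *ᵥ xbar)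
      = xbar + (M ^ m) *ᵥ (x₀ - xbar) := by
  rw [mulVec_mulVec, ← neg_sub M 1, mul_neg, geom_sum_mul, neg_sub, sub_mulVec, one_mulVec,
    mulVec_sub]
  abel

end Matrix

theorem stmt_7 (n : ℕ) (M : Matrix (Fin n) (Fin n) ℝ)
    (hdiag : ∃ (P : Matrix (Fin n) (Fin n) ℂ) (D : Fin n → ℂ),
      IsUnit P.det ∧ M.map (algebraMap ℝ ℂ) = P * Matrix.diagonal D * P⁻¹)
    (hle : ∀ lam : ℂ, ((M.map (algebraMap ℝ ℂ)).charpoly).IsRoot lam → ‖lam‖ ≤ 1)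
    (hone : ∀ lam : ℂ, ((M.map (algebraMap ℝ ℂ)).charpoly).IsRoot lam →
      ‖lam‖ = 1 → lam = 1)
    (b : Fin n → ℝ)
    (hb : b ∈ Set.range (fun x : Fin n → ℝ => ((1 : Matrix (Fin n) (Fin n) ℝ) - M) *ᵥ x)) :
    ∀ x₀ : Fin n → ℝ, ∃ xbar y : Fin n → ℝ,
      ((1 : Matrix (Fin n) (Fin n) ℝ) - M) *ᵥ xbar = b ∧ M *ᵥ y = y ∧
      Tendsto (fun m : ℕ => (M ^ m) *ᵥ x₀ + (∑ k ∈ Finset.range m, M ^ k) *ᵥ b)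
        atTop (nhds (xbar + y)) := by
  intro x₀
  obtain ⟨P, D, hP, hM⟩ := hdiag
  obtain ⟨xbar, rfl⟩ := hb
  have hroot := isRoot_charpoly_of_eq_conj_diagonal hP hM
  obtain ⟨Q, hQ⟩ := exists_tendsto_pow_of_exists_tendsto_pow_map <|
    exists_tendsto_pow_of_eq_conj_diagonal hP hM fun i =>
      exists_tendsto_pow_of_norm_le_one (hle _ (hroot i)) (hone _ (hroot i))
  refine ⟨xbar, Q *ᵥ (x₀ - xbar), rfl, by rw [mulVec_mulVec, mul_eq_of_tendsto_pow hQ], ?_⟩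
  simp only [pow_mulVec_add_geom_sum_mulVec]
  exact tendsto_const_nhds.add
    (((continuous_id.matrix_mulVec continuous_const).tendsto Q).comp hQ)
end

section
/- Let g : ℝ → ℝ be continuous with finite limits g(-∞) = lim_{x→-∞} g(x) and g(∞) = lim_{x→∞} g(x), and g(-∞) < g(x) < g(∞) for all x. Let a, f be continuous p-periodic with ∫₀ᵖ a = 0 and μ(t) = exp(∫₀ᵗ a). If x is a p-periodic solution of x' + a(t)x + g(x) = f(t), then g(-∞)∫₀ᵖ μ < ∫₀ᵖ μ f < g(∞)∫₀ᵖ μ. -/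
/-!
Multiplying the equation by the integrating factor `μ` (with `μ' = a μ`) turns it into
`(μ x)' = μ f - μ g(x)`. Since `∫₀ᵖ a = 0` gives `μ p = μ 0`, integrating over a period of `x`
yields `∫₀ᵖ μ f = ∫₀ᵖ μ g(x)`, and the claim follows from `g(-∞) < g < g(∞)` and `μ > 0`.
-/

open intervalIntegral Filter Set

section WeightedMean

variable {w u : ℝ → ℝ} {c t₀ t₁ : ℝ}

theorem mul_integral_lt_integral_mul (h : t₀ < t₁) (hw : ContinuousOn w (Icc t₀ t₁))
    (hu : ContinuousOn u (Icc t₀ t₁)) (hw_pos : ∀ t ∈ Icc t₀ t₁, 0 < w t)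
    (hc : ∀ t ∈ Icc t₀ t₁, c < u t) :
    c * ∫ t in t₀..t₁, w t < ∫ t in t₀..t₁, w t * u t := by
  rw [← integral_const_mul]
  refine integral_lt_integral_of_continuousOn_of_le_of_exists_lt h (continuousOn_const.mul hw)
    (hw.mul hu) (fun t ht ↦ ?_) ⟨t₀, left_mem_Icc.2 h.le, ?_⟩
  · have ht := Ioc_subset_Icc_self ht
    nlinarith [hw_pos t ht, hc t ht]
  · nlinarith [hw_pos t₀ (left_mem_Icc.2 h.le), hc t₀ (left_mem_Icc.2 h.le)]

theorem integral_mul_lt_mul_integral (h : t₀ < t₁) (hw : ContinuousOn w (Icc t₀ t₁))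
    (hu : ContinuousOn u (Icc t₀ t₁)) (hw_pos : ∀ t ∈ Icc t₀ t₁, 0 < w t)
    (hc : ∀ t ∈ Icc t₀ t₁, u t < c) :
    ∫ t in t₀..t₁, w t * u t < c * ∫ t in t₀..t₁, w t := by
  have := mul_integral_lt_integral_mul (c := -c) h hw hu.neg hw_pos fun t ht ↦ neg_lt_neg (hc t ht)
  simpa only [Pi.neg_apply, mul_neg, integral_neg, neg_mul, neg_lt_neg_iff] using this

end WeightedMean

theorem hasDerivAt_exp_integral {a : ℝ → ℝ} (ha : Continuous a) (t : ℝ) :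
    HasDerivAt (fun t ↦ Real.exp (∫ s in (0 : ℝ)..t, a s))
      (Real.exp (∫ s in (0 : ℝ)..t, a s) * a t) t :=
  (ha.integral_hasStrictDerivAt 0 t).hasDerivAt.exp

theorem integral_mul_eq_zero_of_hasDerivAt {μ a x r : ℝ → ℝ} {t₀ t₁ : ℝ}
    (hμ : ∀ t, HasDerivAt μ (μ t * a t) t) (hx : ∀ t, HasDerivAt x (r t - a t * x t) t)
    (hr : Continuous r) (hμx : μ t₁ * x t₁ = μ t₀ * x t₀) :
    ∫ t in t₀..t₁, μ t * r t = 0 := by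
  have hμx' : ∀ t, HasDerivAt (fun t ↦ μ t * x t) (μ t * r t) t := fun t ↦
    ((hμ t).mul (hx t)).congr_deriv (by ring)
  have hμc : Continuous μ := continuous_iff_continuousAt.2 fun t ↦ (hμ t).continuousAt
  rw [integral_eq_sub_of_hasDerivAt (fun t _ ↦ hμx' t) ((hμc.mul hr).intervalIntegrable _ _),
    hμx, sub_self]

theorem stmt_9_general (p : ℝ) (hp : 0 < p) (a f g : ℝ → ℝ)
    (ha : Continuous a) (hf : Continuous f) (hg : Continuous g)
    (hina : ∫ s in (0:ℝ)..p, a s = 0)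
    (μ : ℝ → ℝ) (hμ : ∀ t, μ t = Real.exp (∫ s in (0:ℝ)..t, a s))
    (gm gp : ℝ)
    (hgb : ∀ x : ℝ, gm < g x ∧ g x < gp)
    (x : ℝ → ℝ) (hx : ∀ t, HasDerivAt x (f t - a t * x t - g (x t)) t)
    (hxp : ∀ t, x (t + p) = x t) :
    gm * ∫ t in (0:ℝ)..p, μ t < ∫ t in (0:ℝ)..p, μ t * f t ∧
    (∫ t in (0:ℝ)..p, μ t * f t) < gp * ∫ t in (0:ℝ)..p, μ t := by
  have hμ' : ∀ t, HasDerivAt μ (μ t * a t) t := fun t ↦ by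
    rw [hμ t, funext hμ]
    exact hasDerivAt_exp_integral ha t
  have hμc : Continuous μ := continuous_iff_continuousAt.2 fun t ↦ (hμ' t).continuousAt
  have hgx : Continuous fun t ↦ g (x t) :=
    hg.comp (continuous_iff_continuousAt.2 fun t ↦ (hx t).continuousAt)
  have hperiod : ∫ t in (0:ℝ)..p, μ t * (f t - g (x t)) = 0 :=
    integral_mul_eq_zero_of_hasDerivAt hμ' (fun t ↦ (hx t).congr_deriv (by ring)) (hf.sub hgx)
      (by simpa [hμ, hina] using hxp 0)
  have hbalance : ∫ t in (0:ℝ)..p, μ t * f t = ∫ t in (0:ℝ)..p, μ t * g (x t) := by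
    simp only [mul_sub] at hperiod
    rwa [integral_sub (f := fun t ↦ μ t * f t) (g := fun t ↦ μ t * g (x t))
      ((hμc.mul hf).intervalIntegrable _ _) ((hμc.mul hgx).intervalIntegrable _ _),
      sub_eq_zero] at hperiod
  rw [hbalance]
  exact ⟨mul_integral_lt_integral_mul hp hμc.continuousOn hgx.continuousOn
      (fun t _ ↦ hμ t ▸ Real.exp_pos _) fun t _ ↦ (hgb (x t)).1,
    integral_mul_lt_mul_integral hp hμc.continuousOn hgx.continuousOn
      (fun t _ ↦ hμ t ▸ Real.exp_pos _) fun t _ ↦ (hgb (x t)).2⟩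

theorem stmt_9 (p : ℝ) (hp : 0 < p) (a f g : ℝ → ℝ)
    (ha : Continuous a) (hf : Continuous f) (hg : Continuous g)
    (hap : ∀ t, a (t + p) = a t) (hfp : ∀ t, f (t + p) = f t)
    (hina : ∫ s in (0:ℝ)..p, a s = 0)
    (μ : ℝ → ℝ) (hμ : ∀ t, μ t = Real.exp (∫ s in (0:ℝ)..t, a s))
    (gm gp : ℝ) (hgm : Tendsto g atBot (nhds gm)) (hgp : Tendsto g atTop (nhds gp))
    (hgb : ∀ x : ℝ, gm < g x ∧ g x < gp)
    (x : ℝ → ℝ) (hx : ∀ t, HasDerivAt x (f t - a t * x t - g (x t)) t)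
    (hxp : ∀ t, x (t + p) = x t) :
    gm * ∫ t in (0:ℝ)..p, μ t < ∫ t in (0:ℝ)..p, μ t * f t ∧
    (∫ t in (0:ℝ)..p, μ t * f t) < gp * ∫ t in (0:ℝ)..p, μ t :=
  stmt_9_general p hp a f g ha hf hg hina μ hμ gm gp hgb x hx hxp
end

section
/- Under the assumptions ∫₀ᵖ a = 0, g(-∞) < g(x) < g(∞) for all x, and g(-∞)∫₀ᵖ μ < ∫₀ᵖ μ f < g(∞)∫₀ᵖ μ (with μ(t) = exp(∫₀ᵗ a)), the equation x' + a(t)x + g(x) = f(t) has a p-periodic solution. -/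
/-!
With `μ t = exp (∫₀ᵗ a)`, the substitution `y = μ x` turns the equation into
`y' = μ (f - g (y / μ))`, whose right-hand side is bounded, `p`-periodic in `t` and locally
Lipschitz in `y`. Solutions from every initial value exist on `[0, p]` and stay within a bounded
distance of it, and the Poincaré map `y₀ ↦ y(p)` is continuous. For large `|y₀|` the values
`g (y / μ)` along the solution are close to `g(±∞)`, so the Landesman–Lazer inequalities make
`y(p) - y₀ = ∫₀ᵖ y'` negative for large `y₀` and positive for very negative `y₀`. A fixed point of
the Poincaré map, found by the intermediate value theorem, extends to a periodic solution.
-/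

open Set Filter Function intervalIntegral MeasureTheory
open scoped NNReal Topology

theorem Function.Periodic.exists_abs_le {f : ℝ → ℝ} {p : ℝ} (hfp : Periodic f p)
    (hp : p ≠ 0) (hf : Continuous f) : ∃ C, ∀ t, |f t| ≤ C := by
  obtain ⟨C, hC⟩ := isBounded_iff_forall_norm_le.1 (hfp.isBounded_of_continuous hp hf)
  exact ⟨C, fun t => hC _ (mem_range_self t)⟩

theorem Function.Periodic.exists_pos_le {f : ℝ → ℝ} {p : ℝ} (hfp : Periodic f p)
    (hp : p ≠ 0) (hf : Continuous f) (hpos : ∀ t, 0 < f t) : ∃ m, 0 < m ∧ ∀ t, m ≤ f t := by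
  obtain ⟨_, ⟨t₀, rfl⟩, hmin⟩ :=
    (hfp.compact_of_continuous hp hf).exists_isLeast (range_nonempty f)
  exact ⟨f t₀, hpos t₀, fun t => hmin (mem_range_self t)⟩

theorem periodic_integral_of_integral_eq_zero {a : ℝ → ℝ} {p : ℝ} (ha : Continuous a)
    (hap : Periodic a p) (h0 : ∫ s in 0..p, a s = 0) : Periodic (fun t => ∫ s in 0..t, a s) p :=
  fun t => by simp [hap.intervalIntegral_add_eq_add 0 t fun _ _ => ha.intervalIntegrable _ _, h0]

theorem exists_periodic_eqOn_Icc {α : Type*} {W : ℝ → α} {p : ℝ} (hp : 0 < p)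
    (hW : W p = W 0) : ∃ Z : ℝ → α, Periodic Z p ∧ EqOn Z W (Icc 0 p) := by
  refine ⟨fun t => W (toIcoMod hp 0 t), fun t => by simp only [toIcoMod_add_right], ?_⟩
  have hp0 : toIcoMod hp 0 p = 0 := by simpa using toIcoMod_apply_right hp (0 : ℝ)
  intro t ht
  rcases ht.2.lt_or_eq with htp | rfl
  · simp only [(toIcoMod_eq_self hp).2 ⟨ht.1, by simpa using htp⟩]
  · simp only [hp0, hW]

theorem Function.Periodic.hasDerivAt_of_hasDerivWithinAt_Icc {E : Type*} [NormedAddCommGroup E]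
    [NormedSpace ℝ E] {Z F : ℝ → E} {p : ℝ} (hp : 0 < p) (hZ : Periodic Z p) (hF : Periodic F p)
    (hd : ∀ t ∈ Icc 0 p, HasDerivWithinAt Z (F t) (Icc 0 p) t) (t : ℝ) :
    HasDerivAt Z (F t) t := by
  have hIco : ∀ s ∈ Ico 0 p, HasDerivAt Z (F s) s := by
    rintro s ⟨hs0, hsp⟩
    rcases hs0.eq_or_lt with rfl | hs0
    · have hright : HasDerivWithinAt Z (F 0) (Ici 0) 0 :=
        (hd 0 ⟨le_rfl, hp.le⟩).mono_of_mem_nhdsWithin (Icc_mem_nhdsGE hp)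
      -- near `0` from the left, `Z` is the translate of `Z` near `p` from the left
      have hleft : HasDerivWithinAt Z (F 0) (Iic 0) 0 := by
        have h := ((hd p ⟨hp.le, le_rfl⟩).mono_of_mem_nhdsWithin (Icc_mem_nhdsLE hp)).scomp_of_eq
          (0 : ℝ) ((hasDerivAt_id (0 : ℝ)).add_const p).hasDerivWithinAt
          (fun u hu => by simpa using mem_Iic.1 hu : MapsTo (· + p) (Iic 0) (Iic p)) (by simp)
        simpa [comp_def, hZ _, hF.eq] using h
      simpa using hleft.union hright
    · exact (hd s ⟨hs0.le, hsp.le⟩).hasDerivAt (Icc_mem_nhds hs0 hsp)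
  have hs : toIcoMod hp 0 t ∈ Ico 0 p := by simpa using toIcoMod_mem_Ico hp 0 t
  have h := hIco _ hs
  rw [← self_sub_toIcoDiv_zsmul] at h
  simpa only [hZ.sub_zsmul_eq, hF.sub_zsmul_eq] using h.comp_sub_const t (toIcoDiv hp 0 t • p)

section PeriodicODE

variable {G : ℝ → ℝ → ℝ} {p B : ℝ}

theorem exists_hasDerivWithinAt_Icc_of_lipschitzOnWith (hp : 0 ≤ p)
    (hG : ∀ y, Continuous (G · y)) (hlip : ∀ r, ∃ K, ∀ t, LipschitzOnWith K (G t) (Icc (-r) r))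
    (hbdd : ∀ t y, |G t y| ≤ B) (y₀ : ℝ) :
    ∃ Y : ℝ → ℝ, Y 0 = y₀ ∧ ∀ t ∈ Icc 0 p, HasDerivWithinAt Y (G t (Y t)) (Icc 0 p) t := by
  have hB : 0 ≤ B := (abs_nonneg _).trans (hbdd 0 0)
  obtain ⟨K, hK⟩ := hlip (|y₀| + B * p)
  have hball : Metric.closedBall y₀ (B * p) ⊆ Icc (-(|y₀| + B * p)) (|y₀| + B * p) := by
    rw [Real.closedBall_eq_Icc]
    exact Icc_subset_Icc (by linarith [neg_abs_le y₀]) (by linarith [le_abs_self y₀])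
  have hPL : IsPicardLindelof G (⟨0, left_mem_Icc.2 hp⟩ : Icc (0 : ℝ) p) y₀
      ⟨B * p, by positivity⟩ 0 ⟨B, hB⟩ K :=
    { lipschitzOnWith := fun t _ => (hK t).mono hball
      continuousOn := fun y _ => (hG y).continuousOn
      norm_le := fun t _ y _ => hbdd t y
      mul_max_le := by simp [hp]; exact le_rfl }
  exact hPL.exists_eq_forall_mem_Icc_hasDerivWithinAt₀

variable {Y : ℝ → ℝ}

theorem abs_sub_le_of_hasDerivWithinAt_Icc (hbdd : ∀ t y, |G t y| ≤ B)
    (hY : ∀ t ∈ Icc 0 p, HasDerivWithinAt Y (G t (Y t)) (Icc 0 p) t) {t : ℝ}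
    (ht : t ∈ Icc 0 p) : |Y t - Y 0| ≤ B * p :=
  calc |Y t - Y 0| ≤ B * t := by
        simpa using norm_image_sub_le_of_norm_deriv_le_segment' hY (fun s _ => hbdd s (Y s)) t ht
    _ ≤ B * p := mul_le_mul_of_nonneg_left ht.2 ((abs_nonneg _).trans (hbdd 0 0))

theorem sub_le_integral_of_hasDerivWithinAt_Icc {h : ℝ → ℝ} (hp : 0 ≤ p)
    (hY : ∀ t ∈ Icc 0 p, HasDerivWithinAt Y (G t (Y t)) (Icc 0 p) t)
    (hh : IntegrableOn h (Icc 0 p)) (hGh : ∀ t ∈ Icc 0 p, G t (Y t) ≤ h t) :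
    Y p - Y 0 ≤ ∫ t in 0..p, h t :=
  sub_le_integral_of_hasDeriv_right_of_le hp (fun t ht => (hY t ht).continuousWithinAt)
    (fun t ht => (hY t (Ioo_subset_Icc_self ht)).mono_of_mem_nhdsWithin
      (Icc_mem_nhdsGT_of_mem (Ioo_subset_Ico_self ht)))
    hh fun t ht => hGh t (Ioo_subset_Icc_self ht)

theorem integral_le_sub_of_hasDerivWithinAt_Icc {h : ℝ → ℝ} (hp : 0 ≤ p)
    (hY : ∀ t ∈ Icc 0 p, HasDerivWithinAt Y (G t (Y t)) (Icc 0 p) t)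
    (hh : IntegrableOn h (Icc 0 p)) (hGh : ∀ t ∈ Icc 0 p, h t ≤ G t (Y t)) :
    ∫ t in 0..p, h t ≤ Y p - Y 0 :=
  integral_le_sub_of_hasDeriv_right_of_le hp (fun t ht => (hY t ht).continuousWithinAt)
    (fun t ht => (hY t (Ioo_subset_Icc_self ht)).mono_of_mem_nhdsWithin
      (Icc_mem_nhdsGT_of_mem (Ioo_subset_Ico_self ht)))
    hh fun t ht => hGh t (Ioo_subset_Icc_self ht)

theorem continuousOn_apply_of_hasDerivWithinAt_Icc (hp : 0 ≤ p)
    (hlip : ∀ r, ∃ K, ∀ t, LipschitzOnWith K (G t) (Icc (-r) r))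
    (hbdd : ∀ t y, |G t y| ≤ B) {Y : ℝ → ℝ → ℝ} (hY0 : ∀ y, Y y 0 = y)
    (hY : ∀ y, ∀ t ∈ Icc 0 p, HasDerivWithinAt (Y y) (G t (Y y t)) (Icc 0 p) t) (R : ℝ) :
    ContinuousOn (fun y => Y y p) (Icc (-R) R) := by
  obtain ⟨K, hK⟩ := hlip (R + B * p)
  have hmem : ∀ y ∈ Icc (-R) R, ∀ t ∈ Ico 0 p, Y y t ∈ Icc (-(R + B * p)) (R + B * p) := by
    intro y hy t ht
    have h := abs_le.1 (abs_sub_le_of_hasDerivWithinAt_Icc hbdd (hY y) (Ico_subset_Icc_self ht))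
    rw [hY0] at h
    exact ⟨by linarith [hy.1], by linarith [hy.2]⟩
  have hcont : ∀ y, ContinuousOn (Y y) (Icc 0 p) := fun y t ht => (hY y t ht).continuousWithinAt
  have hright : ∀ y, ∀ t ∈ Ico 0 p, HasDerivWithinAt (Y y) (G t (Y y t)) (Ici t) t :=
    fun y t ht => (hY y t (Ico_subset_Icc_self ht)).mono_of_mem_nhdsWithin
      (Icc_mem_nhdsGE_of_mem ht)
  refine (LipschitzOnWith.of_dist_le_mul fun y hy z hz => ?_).continuousOn
    (K := (Real.exp (K * p)).toNNReal)
  have h := dist_le_of_trajectories_ODE_of_mem (fun t _ => hK t) (hcont y) (hright y)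
    (hmem y hy) (hcont z) (hright z) (hmem z hz) (by rw [hY0, hY0]) p ⟨hp, le_rfl⟩
  rw [Real.coe_toNNReal _ (Real.exp_pos _).le, mul_comm]
  simpa using h

theorem exists_periodic_hasDerivAt_of_integral_bounds (hp : 0 < p)
    (hG : ∀ y, Continuous (G · y)) (hlip : ∀ r, ∃ K, ∀ t, LipschitzOnWith K (G t) (Icc (-r) r))
    (hbdd : ∀ t y, |G t y| ≤ B) (hper : ∀ t y, G (t + p) y = G t y) {φ ψ : ℝ → ℝ}
    (hφ : IntegrableOn φ (Icc 0 p)) (hψ : IntegrableOn ψ (Icc 0 p))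
    (hφint : ∫ t in 0..p, φ t < 0) (hψint : 0 < ∫ t in 0..p, ψ t)
    (hGφ : ∀ᶠ y in atTop, ∀ t, G t y ≤ φ t) (hGψ : ∀ᶠ y in atBot, ∀ t, ψ t ≤ G t y) :
    ∃ y : ℝ → ℝ, (∀ t, HasDerivAt y (G t (y t)) t) ∧ Periodic y p := by
  choose Y hY0 hY using exists_hasDerivWithinAt_Icc_of_lipschitzOnWith hp.le hG hlip hbdd
  have hB : 0 ≤ B := (abs_nonneg _).trans (hbdd 0 0)
  obtain ⟨L₁, hL₁⟩ := eventually_atTop.1 hGφ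
  obtain ⟨L₂, hL₂⟩ := eventually_atBot.1 hGψ
  -- trajectories starting at `±R` stay in the regions where the bounds `φ`, `ψ` apply
  set R := |L₁| + |L₂| + B * p
  have hbound : ∀ y t, t ∈ Icc 0 p → -(B * p) ≤ Y y t - y ∧ Y y t - y ≤ B * p :=
    fun y t ht => by simpa [hY0] using abs_le.1 (abs_sub_le_of_hasDerivWithinAt_Icc hbdd (hY y) ht)
  have hR0 : 0 ≤ R := by positivity
  have hR : Y R p - R < 0 := by
    have h := sub_le_integral_of_hasDerivWithinAt_Icc hp.le (hY R) hφ
      fun t ht => hL₁ _ (by linarith [(hbound R t ht).1, le_abs_self L₁, abs_nonneg L₂]) t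
    rw [hY0] at h
    linarith
  have hR' : 0 < Y (-R) p - (-R) := by
    have h := integral_le_sub_of_hasDerivWithinAt_Icc hp.le (hY (-R)) hψ
      fun t ht => hL₂ _ (by linarith [(hbound (-R) t ht).2, neg_abs_le L₂, abs_nonneg L₁]) t
    rw [hY0] at h
    linarith
  obtain ⟨y₀, -, hy₀⟩ := intermediate_value_Icc' (by linarith : -R ≤ R)
    ((continuousOn_apply_of_hasDerivWithinAt_Icc hp.le hlip hbdd hY0 hY R).sub continuousOn_id)
    ⟨hR.le, hR'.le⟩
  obtain ⟨Z, hZ, hZY⟩ := exists_periodic_eqOn_Icc hp (W := Y y₀)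
    (by rw [hY0]; simpa [sub_eq_zero] using hy₀)
  refine ⟨Z, hZ.hasDerivAt_of_hasDerivWithinAt_Icc hp (fun t => by simp only [hper, hZ t])
    fun t ht => ?_, hZ⟩
  rw [hZY ht]
  exact (hY y₀ t ht).congr (fun s hs => hZY hs) (hZY ht)

end PeriodicODE

section WeightedEquation

variable {μ f g : ℝ → ℝ}

theorem eventually_atTop_forall_lt_comp_div {M c : ℝ} (hμ : ∀ t, 0 < μ t) (hM : ∀ t, μ t ≤ M)
    (hg : ∀ᶠ x in atTop, c < g x) : ∀ᶠ y in atTop, ∀ t, c < g (y / μ t) := by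
  obtain ⟨X, hX⟩ := eventually_atTop.1 hg
  have hM0 : 0 < M := (hμ 0).trans_le (hM 0)
  filter_upwards [(tendsto_id.atTop_div_const hM0).eventually_ge_atTop X, eventually_ge_atTop 0]
    with y hyX hy0 t
  exact hX _ (hyX.trans (div_le_div_of_nonneg_left hy0 (hμ t) (hM t)))

theorem eventually_atBot_forall_comp_div_lt {M c : ℝ} (hμ : ∀ t, 0 < μ t) (hM : ∀ t, μ t ≤ M)
    (hg : ∀ᶠ x in atBot, g x < c) : ∀ᶠ y in atBot, ∀ t, g (y / μ t) < c := by
  obtain ⟨X, hX⟩ := eventually_atBot.1 hg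
  have hM0 : 0 < M := (hμ 0).trans_le (hM 0)
  filter_upwards [(tendsto_id.atBot_div_const hM0).eventually_le_atBot X, eventually_le_atBot 0]
    with y hyX hy0 t
  refine hX _ (le_trans ?_ hyX)
  have := div_le_div_of_nonneg_left (neg_nonneg.2 hy0) (hμ t) (hM t)
  rw [neg_div, neg_div] at this
  exact neg_le_neg_iff.1 this

theorem exists_lipschitzOnWith_mul_sub_comp_div (hg : LocallyLipschitz g) {m : ℝ} (hm : 0 < m)
    (hμ : ∀ t, m ≤ μ t) (r : ℝ) :
    ∃ K, ∀ t, LipschitzOnWith K (fun y => μ t * (f t - g (y / μ t))) (Icc (-r) r) := by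
  obtain ⟨K, hK⟩ := hg.locallyLipschitzOn.exists_lipschitzOnWith_of_compact
    (isCompact_Icc (a := -(r / m)) (b := r / m))
  refine ⟨K, fun t => LipschitzOnWith.of_dist_le_mul fun y hy z hz => ?_⟩
  have hμt : 0 < μ t := hm.trans_le (hμ t)
  have hmem : ∀ y ∈ Icc (-r) r, y / μ t ∈ Icc (-(r / m)) (r / m) := by
    intro y hy
    have hr : 0 ≤ r := by linarith [hy.1, hy.2]
    rw [mem_Icc, ← abs_le, abs_div, abs_of_pos hμt, div_le_iff₀ hμt]
    calc |y| ≤ r := abs_le.2 hy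
      _ = r / m * m := by field_simp
      _ ≤ r / m * μ t := by gcongr; exact hμ t
  calc dist (μ t * (f t - g (y / μ t))) (μ t * (f t - g (z / μ t)))
      = μ t * dist (g (y / μ t)) (g (z / μ t)) := by
        rw [Real.dist_eq, Real.dist_eq, ← mul_sub, abs_mul, abs_of_pos hμt, abs_sub_comm]
        ring_nf
    _ ≤ μ t * (K * dist (y / μ t) (z / μ t)) := by
        gcongr
        exact hK.dist_le_mul _ (hmem y hy) _ (hmem z hz)
    _ = K * dist y z := by
        rw [Real.dist_eq, Real.dist_eq, ← sub_div, abs_div, abs_of_pos hμt]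
        field_simp

theorem integral_mul_sub_const (hμ : Continuous μ) (hf : Continuous f) (a b c : ℝ) :
    ∫ t in a..b, μ t * (f t - c) = (∫ t in a..b, μ t * f t) - c * ∫ t in a..b, μ t := by
  simp_rw [mul_sub]
  rw [integral_sub (Continuous.intervalIntegrable (by fun_prop) _ _)
    (Continuous.intervalIntegrable (by fun_prop) _ _), intervalIntegral.integral_mul_const,
    mul_comm]

theorem exists_periodic_hasDerivAt_mul_sub_comp_div {p gm gp : ℝ} (hp : 0 < p)
    (hμc : Continuous μ) (hμp : Periodic μ p) (hμ : ∀ t, 0 < μ t)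
    (hf : Continuous f) (hfp : Periodic f p) (hg : LocallyLipschitz g)
    (hgm : Tendsto g atBot (𝓝 gm)) (hgp : Tendsto g atTop (𝓝 gp)) (hgb : ∀ x, gm < g x ∧ g x < gp)
    (hLL : gm * ∫ t in 0..p, μ t < ∫ t in 0..p, μ t * f t ∧
      ∫ t in 0..p, μ t * f t < gp * ∫ t in 0..p, μ t) :
    ∃ y : ℝ → ℝ, (∀ t, HasDerivAt y (μ t * (f t - g (y t / μ t))) t) ∧ Periodic y p := by
  obtain ⟨m, hm, hμm⟩ := hμp.exists_pos_le hp.ne' hμc hμ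
  obtain ⟨M, hM⟩ := hμp.exists_abs_le hp.ne' hμc
  obtain ⟨Cf, hCf⟩ := hfp.exists_abs_le hp.ne' hf
  have hμM : ∀ t, μ t ≤ M := fun t => (le_abs_self _).trans (hM t)
  have hCg : ∀ x, |g x| ≤ max |gm| |gp| := fun x => abs_le_max_abs_abs (hgb x).1.le (hgb x).2.le
  have hI : 0 < ∫ t in 0..p, μ t :=
    intervalIntegral_pos_of_pos (hμc.intervalIntegrable _ _) hμ hp
  obtain ⟨c₁, hc₁, hc₁gp⟩ := exists_between ((div_lt_iff₀ hI).2 hLL.2)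
  obtain ⟨c₂, hgmc₂, hc₂⟩ := exists_between ((lt_div_iff₀ hI).2 hLL.1)
  refine exists_periodic_hasDerivAt_of_integral_bounds hp
    (G := fun t y => μ t * (f t - g (y / μ t))) (B := M * (Cf + max |gm| |gp|))
    (φ := fun t => μ t * (f t - c₁)) (ψ := fun t => μ t * (f t - c₂))
    (fun y => by have := hg.continuous; fun_prop (disch := exact fun t => (hμ t).ne'))
    ?_ ?_ ?_ ?_ ?_ ?_ ?_ ?_ ?_
  · exact exists_lipschitzOnWith_mul_sub_comp_div hg hm hμm
  · intro t y
    rw [abs_mul]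
    exact mul_le_mul (hM t) ((abs_sub _ _).trans (add_le_add (hCf t) (hCg _))) (abs_nonneg _)
      ((abs_nonneg _).trans (hM t))
  · intro t y
    simp only [hμp t, hfp t]
  · exact Continuous.integrableOn_Icc (by fun_prop)
  · exact Continuous.integrableOn_Icc (by fun_prop)
  · rw [integral_mul_sub_const hμc hf]
    linarith [(div_lt_iff₀ hI).1 hc₁]
  · rw [integral_mul_sub_const hμc hf]
    linarith [(lt_div_iff₀ hI).1 hc₂]
  · filter_upwards [eventually_atTop_forall_lt_comp_div hμ hμM
      (hgp.eventually (lt_mem_nhds hc₁gp))] with y hy t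
    exact mul_le_mul_of_nonneg_left (by linarith [hy t]) (hμ t).le
  · filter_upwards [eventually_atBot_forall_comp_div_lt hμ hμM
      (hgm.eventually (gt_mem_nhds hgmc₂))] with y hy t
    exact mul_le_mul_of_nonneg_left (by linarith [hy t]) (hμ t).le

end WeightedEquation

theorem stmt_10 (p : ℝ) (hp : 0 < p) (a f g : ℝ → ℝ)
    (ha : Continuous a) (hf : Continuous f) (hg : ContDiff ℝ 1 g)
    (hap : ∀ t, a (t + p) = a t) (hfp : ∀ t, f (t + p) = f t)
    (hina : ∫ s in (0:ℝ)..p, a s = 0)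
    (μ : ℝ → ℝ) (hμ : ∀ t, μ t = Real.exp (∫ s in (0:ℝ)..t, a s))
    (gm gp : ℝ) (hgm : Tendsto g atBot (nhds gm)) (hgp : Tendsto g atTop (nhds gp))
    (hgb : ∀ x : ℝ, gm < g x ∧ g x < gp)
    (hLL : gm * ∫ t in (0:ℝ)..p, μ t < ∫ t in (0:ℝ)..p, μ t * f t ∧
      (∫ t in (0:ℝ)..p, μ t * f t) < gp * ∫ t in (0:ℝ)..p, μ t) :
    ∃ x : ℝ → ℝ, (∀ t, HasDerivAt x (f t - a t * x t - g (x t)) t) ∧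
      ∀ t, x (t + p) = x t := by
  have hA : ∀ t, HasDerivAt (fun t => ∫ s in 0..t, a s) (a t) t :=
    fun t => (ha.integral_hasStrictDerivAt 0 t).hasDerivAt
  have hμe : μ = fun t => Real.exp (∫ s in 0..t, a s) := funext hμ
  have hμd : ∀ t, HasDerivAt μ (μ t * a t) t := fun t => by rw [hμe]; exact (hA t).exp
  have hμpos : ∀ t, 0 < μ t := fun t => hμ t ▸ Real.exp_pos _
  have hμp : Periodic μ p := by
    rw [hμe]
    exact (periodic_integral_of_integral_eq_zero ha hap hina).comp Real.exp
  obtain ⟨y, hy, hyp⟩ := exists_periodic_hasDerivAt_mul_sub_comp_div hp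
    (continuous_iff_continuousAt.2 fun t => (hμd t).continuousAt) hμp hμpos hf hfp
    hg.locallyLipschitz hgm hgp hgb hLL
  refine ⟨fun t => y t / μ t, fun t => ?_, fun t => by simp only [hyp t, hμp t]⟩
  refine ((hy t).div (hμd t) (hμpos t).ne').congr_deriv ?_
  field_simp [(hμpos t).ne']
  ring
end

section
/- Assume ∫₀ᵖ a = 0, g' (x) > 0 for all x, and that x' + a(t)x + g(x) = f(t) has a p-periodic solution y. Then for any other solution x of the same equation, x(t) - y(t) → 0 as t → ∞; in particular the p-periodic solution is unique. -/
/-!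
With `A t = ∫₀ᵗ a`, the weight `e^{2A}` absorbs the linear term of the equation, so for two
solutions `V = (x - y)² e^{2A}` satisfies `V' = -2 (x - y) (g x - g y) e^{2A} ≤ 0`. Since
`∫₀ᵖ a = 0`, `A` is periodic, hence bounded, and `(x - y)² ≤ M V`. Thus `V` being nonincreasing
keeps `x` in a compact interval for `t ≥ 0`, on which `g' ≥ c > 0`; there `V' ≤ -2 c V`, so
`x - y` decays exponentially. A periodic function tending to `0` vanishes, giving uniqueness.
-/

open intervalIntegral Filter

theorem Function.Periodic.eq_of_tendsto_atTop {α : Type*} [TopologicalSpace α] [T2Space α]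
    {h : ℝ → α} {p : ℝ} (hh : Function.Periodic h p) (hp : 0 < p) {l : α}
    (hlim : Tendsto h atTop (nhds l)) (t : ℝ) : h t = l := by
  have hseq : Tendsto (fun n : ℕ => t + n * p) atTop atTop :=
    tendsto_atTop_add_const_left _ t (tendsto_natCast_atTop_atTop.atTop_mul_const hp)
  exact tendsto_nhds_unique tendsto_const_nhds
    ((hlim.comp hseq).congr fun n => hh.nat_mul n t)

theorem Function.Periodic.periodic_intervalIntegral_of_integral_eq_zero {a : ℝ → ℝ} {p : ℝ}
    (hap : Function.Periodic a p) (ha : Continuous a) (hina : ∫ s in (0:ℝ)..p, a s = 0) :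
    Function.Periodic (fun t => ∫ s in (0:ℝ)..t, a s) p := fun t => by
  simp only [hap.intervalIntegral_add_eq_add 0 t (ha.intervalIntegrable · ·), zero_add, hina,
    add_zero]

theorem mul_sq_sub_le_of_le_deriv {g : ℝ → ℝ} (hg : Differentiable ℝ g) {D : Set ℝ}
    (hD : Convex ℝ D) {c : ℝ} (hc : ∀ w ∈ D, c ≤ deriv g w) {s t : ℝ} (hs : s ∈ D)
    (ht : t ∈ D) : c * (s - t) ^ 2 ≤ (s - t) * (g s - g t) := by
  wlog hts : t ≤ s generalizing s t
  · have := this ht hs (le_of_not_ge hts)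
    linarith [show (t - s) ^ 2 = (s - t) ^ 2 by ring]
  have := hD.mul_sub_le_image_sub_of_le_deriv hg.continuous.continuousOn hg.differentiableOn
    (fun w hw => hc w (interior_subset hw)) t ht s hs hts
  nlinarith

theorem le_mul_exp_of_hasDerivAt_le {V V' : ℝ → ℝ} {k : ℝ} (hV : ∀ t, HasDerivAt V (V' t) t)
    (hle : ∀ t, 0 < t → V' t ≤ -k * V t) {t : ℝ} (ht : 0 ≤ t) :
    V t ≤ V 0 * Real.exp (-(k * t)) := by
  set W := fun s => V s * Real.exp (k * s)
  have hW : ∀ s, HasDerivAt W ((V' s + k * V s) * Real.exp (k * s)) s := fun s => by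
    refine ((hV s).mul ((hasDerivAt_id' s).const_mul k).exp).congr_deriv ?_
    ring
  have hWanti : AntitoneOn W (Set.Ici 0) := by
    refine antitoneOn_of_deriv_nonpos (convex_Ici 0)
      (fun s _ => (hW s).continuousAt.continuousWithinAt)
      (fun s _ => (hW s).differentiableAt.differentiableWithinAt) fun s hs => ?_
    rw [interior_Ici] at hs
    rw [(hW s).deriv]
    exact mul_nonpos_of_nonpos_of_nonneg (by linarith [hle s hs]) (Real.exp_pos _).le
  calc V t = W t * Real.exp (-(k * t)) := by
        simp only [W, mul_assoc, ← Real.exp_add, add_neg_cancel, Real.exp_zero, mul_one]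
    _ ≤ W 0 * Real.exp (-(k * t)) := by
        gcongr
        exact hWanti Set.self_mem_Ici ht ht
    _ = V 0 * Real.exp (-(k * t)) := by simp [W]

section WeightedSqDist

variable {a f g x y : ℝ → ℝ}

variable (a x y) in
noncomputable def weightedSqDist (t : ℝ) : ℝ :=
  (x t - y t) ^ 2 * Real.exp (2 * ∫ s in (0:ℝ)..t, a s)

theorem hasDerivAt_weightedSqDist (ha : Continuous a)
    (hx : ∀ t, HasDerivAt x (f t - a t * x t - g (x t)) t)
    (hy : ∀ t, HasDerivAt y (f t - a t * y t - g (y t)) t) (t : ℝ) :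
    HasDerivAt (weightedSqDist a x y)
      (-2 * ((x t - y t) * (g (x t) - g (y t))) * Real.exp (2 * ∫ s in (0:ℝ)..t, a s)) t := by
  have hA : HasDerivAt (fun t => ∫ s in (0:ℝ)..t, a s) (a t) t :=
    integral_hasDerivAt_right (ha.intervalIntegrable _ _) (ha.stronglyMeasurableAtFilter _ _)
      ha.continuousAt
  refine ((((hx t).sub (hy t)).pow 2).mul (hA.const_mul 2).exp).congr_deriv ?_
  simp only [Pi.sub_apply, Pi.pow_apply]
  push_cast
  ring

theorem exists_sq_sub_le_mul_weightedSqDist {p : ℝ} (hp : 0 < p) (ha : Continuous a)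
    (hap : Function.Periodic a p) (hina : ∫ s in (0:ℝ)..p, a s = 0) :
    ∃ M, 0 < M ∧ ∀ t, (x t - y t) ^ 2 ≤ M * weightedSqDist a x y t := by
  have hA := hap.periodic_intervalIntegral_of_integral_eq_zero ha hina
  obtain ⟨B, hB⟩ := isBounded_iff_forall_norm_le.1 (hA.isBounded_of_continuous hp.ne'
    (continuous_primitive (ha.intervalIntegrable · ·) 0))
  refine ⟨Real.exp (2 * B), Real.exp_pos _, fun t => ?_⟩
  have hAt : |∫ s in (0:ℝ)..t, a s| ≤ B := hB _ ⟨t, rfl⟩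
  have hweight : 1 ≤ Real.exp (2 * B) * Real.exp (2 * ∫ s in (0:ℝ)..t, a s) := by
    rw [← Real.exp_add]
    exact Real.one_le_exp (by linarith [(abs_le.1 hAt).1])
  unfold weightedSqDist
  nlinarith [sq_nonneg (x t - y t)]

theorem weightedSqDist_le_mul_exp (ha : Continuous a) (hg : Differentiable ℝ g)
    {D : Set ℝ} (hD : Convex ℝ D) {c : ℝ} (hc : ∀ w ∈ D, c ≤ deriv g w)
    (hx : ∀ t, HasDerivAt x (f t - a t * x t - g (x t)) t)
    (hy : ∀ t, HasDerivAt y (f t - a t * y t - g (y t)) t)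
    (hxD : ∀ t, 0 < t → x t ∈ D) (hyD : ∀ t, 0 < t → y t ∈ D) {t : ℝ} (ht : 0 ≤ t) :
    weightedSqDist a x y t ≤ weightedSqDist a x y 0 * Real.exp (-(2 * c * t)) := by
  refine le_mul_exp_of_hasDerivAt_le (hasDerivAt_weightedSqDist ha hx hy) (fun s hs => ?_) ht
  have := mul_sq_sub_le_of_le_deriv hg hD hc (hxD s hs) (hyD s hs)
  unfold weightedSqDist
  nlinarith [Real.exp_pos (2 * ∫ u in (0:ℝ)..s, a u)]

end WeightedSqDist

theorem tendsto_sub_of_periodic_solution {p : ℝ} (hp : 0 < p) {a f g x y : ℝ → ℝ}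
    (ha : Continuous a) (hg : ContDiff ℝ 1 g) (hg' : ∀ x : ℝ, 0 < deriv g x)
    (hap : Function.Periodic a p) (hina : ∫ s in (0:ℝ)..p, a s = 0)
    (hx : ∀ t, HasDerivAt x (f t - a t * x t - g (x t)) t)
    (hy : ∀ t, HasDerivAt y (f t - a t * y t - g (y t)) t) (hyp : Function.Periodic y p) :
    Tendsto (fun t => x t - y t) atTop (nhds 0) := by
  have hgd : Differentiable ℝ g := hg.differentiable one_ne_zero
  set V := weightedSqDist a x y
  obtain ⟨M, hM0, hM⟩ := exists_sq_sub_le_mul_weightedSqDist (x := x) (y := y) hp ha hap hina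
  have hbdd : ∀ t, 0 ≤ t → (x t - y t) ^ 2 ≤ M * V 0 := fun t ht => by
    have := weightedSqDist_le_mul_exp ha hgd convex_univ (c := 0) (fun w _ => (hg' w).le) hx hy
      (fun _ _ => trivial) (fun _ _ => trivial) ht
    rw [mul_zero, zero_mul, neg_zero, Real.exp_zero, mul_one] at this
    exact (hM t).trans (by gcongr)
  have hyc : Continuous y := Differentiable.continuous fun t => (hy t).differentiableAt
  obtain ⟨Cy, hCy⟩ := isBounded_iff_forall_norm_le.1 (hyp.isBounded_of_continuous hp.ne' hyc)
  set R := Cy + √(M * V 0)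
  have hyR : ∀ t, y t ∈ Set.Icc (-R) R := fun t => by
    have := abs_le.1 (hCy _ ⟨t, rfl⟩)
    constructor <;> linarith [Real.sqrt_nonneg (M * V 0)]
  have hxR : ∀ t, 0 ≤ t → x t ∈ Set.Icc (-R) R := fun t ht => by
    have := abs_le.1 (hCy _ ⟨t, rfl⟩)
    have := abs_le.1 (Real.abs_le_sqrt (hbdd t ht))
    constructor <;> linarith
  obtain ⟨c, hc0, hc⟩ := isCompact_Icc.exists_forall_le' (hg.continuous_deriv le_rfl).continuousOn
    (fun w _ => hg' w)
  have hdecay : ∀ t, 0 ≤ t → (x t - y t) ^ 2 ≤ M * V 0 * Real.exp (-(2 * c * t)) := fun t ht => by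
    have := weightedSqDist_le_mul_exp ha hgd (convex_Icc (-R) R) hc hx hy
      (fun s hs => hxR s hs.le) (fun s _ => hyR s) ht
    rw [mul_assoc]
    exact (hM t).trans (by gcongr)
  have hlim : Tendsto (fun t => M * V 0 * Real.exp (-(2 * c * t))) atTop (nhds 0) := by
    simpa using (Real.tendsto_exp_neg_atTop_nhds_zero.comp
      (tendsto_id.const_mul_atTop (by positivity : 0 < 2 * c))).const_mul (M * V 0)
  have hsq : Tendsto (fun t => (x t - y t) ^ 2) atTop (nhds 0) :=
    squeeze_zero' (.of_forall fun t => sq_nonneg _) ((eventually_ge_atTop 0).mono hdecay) hlim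
  refine (tendsto_zero_iff_abs_tendsto_zero _).2 ?_
  simpa [Function.comp_def, Real.sqrt_sq_eq_abs] using hsq.sqrt

theorem stmt_12_general (p : ℝ) (hp : 0 < p) (a f g : ℝ → ℝ)
    (ha : Continuous a) (hg : ContDiff ℝ 1 g)
    (hg' : ∀ x : ℝ, 0 < deriv g x)
    (hap : ∀ t, a (t + p) = a t)
    (hina : ∫ s in (0:ℝ)..p, a s = 0)
    (y : ℝ → ℝ) (hy : ∀ t, HasDerivAt y (f t - a t * y t - g (y t)) t)
    (hyp : ∀ t, y (t + p) = y t) :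
    (∀ x : ℝ → ℝ, (∀ t, HasDerivAt x (f t - a t * x t - g (x t)) t) →
      Tendsto (fun t => x t - y t) atTop (nhds 0)) ∧
    (∀ z : ℝ → ℝ, (∀ t, HasDerivAt z (f t - a t * z t - g (z t)) t) →
      (∀ t, z (t + p) = z t) → z = y) := by
  have hconv : ∀ x : ℝ → ℝ, (∀ t, HasDerivAt x (f t - a t * x t - g (x t)) t) →
      Tendsto (fun t => x t - y t) atTop (nhds 0) :=
    fun x hx => tendsto_sub_of_periodic_solution hp ha hg hg' hap hina hx hy hyp
  refine ⟨hconv, fun z hz hzp => funext fun t => ?_⟩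
  exact sub_eq_zero.1 ((Function.Periodic.sub hzp hyp).eq_of_tendsto_atTop hp (hconv z hz) t)

theorem stmt_12 (p : ℝ) (hp : 0 < p) (a f g : ℝ → ℝ)
    (ha : Continuous a) (hf : Continuous f) (hg : ContDiff ℝ 1 g)
    (hg' : ∀ x : ℝ, 0 < deriv g x)
    (hap : ∀ t, a (t + p) = a t) (hfp : ∀ t, f (t + p) = f t)
    (hina : ∫ s in (0:ℝ)..p, a s = 0)
    (y : ℝ → ℝ) (hy : ∀ t, HasDerivAt y (f t - a t * y t - g (y t)) t)
    (hyp : ∀ t, y (t + p) = y t) :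
    (∀ x : ℝ → ℝ, (∀ t, HasDerivAt x (f t - a t * x t - g (x t)) t) →
      Tendsto (fun t => x t - y t) atTop (nhds 0)) ∧
    (∀ z : ℝ → ℝ, (∀ t, HasDerivAt z (f t - a t * z t - g (z t)) t) →
      (∀ t, z (t + p) = z t) → z = y) :=
  stmt_12_general p hp a f g ha hg hg' hap hina y hy hyp
end

section
/- (Discrete instability principle) Let X be a finite-dimensional real normed vector space, F : X → X continuous, and V : X → ℝ continuous with V(F(ξ)) > V(ξ) for all ξ ∈ X. Then for any ξ₀, the orbit ξ_{n+1} = F(ξ_n) satisfies ‖ξ_n‖ → ∞ as n → ∞. -/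
/-! A cluster point `p` of the orbit would force `V p` to be the supremum of the increasing
sequence `V (ξ n)`; but `F p` is a cluster point too, and `V (F p) > V p`. So the orbit has no
cluster point, i.e. it leaves every compact set, and in a finite-dimensional space this means
`‖ξ n‖ → ∞`. -/

open Filter

theorem Monotone.le_of_mapClusterPt {ι α : Type*} [Preorder ι] [TopologicalSpace α] [Preorder α]
    [ClosedIciTopology α] {u : ι → α} {a : α} (hu : Monotone u) (ha : MapClusterPt a atTop u)
    (i : ι) : u i ≤ a :=
  isClosed_Ici.mem_of_mapClusterPt ha ((eventually_ge_atTop i).mono fun _ hj => hu hj)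

theorem monotone_comp_iterate_of_le_comp {X α : Type*} [Preorder α] {F : X → X} {V : X → α}
    (hVF : ∀ x, V x ≤ V (F x)) (x₀ : X) :
    Monotone fun n => V (F^[n] x₀) :=
  monotone_nat_of_le_succ fun n => by
    simpa only [Function.iterate_succ_apply'] using hVF (F^[n] x₀)

section StrictLyapunov

variable {X α : Type*} [TopologicalSpace X] [TopologicalSpace α] [Preorder α]
  [OrderClosedTopology α] {F : X → X} {V : X → α}

theorem MapClusterPt.apply_iterate {x₀ p : X} (hF : Continuous F)
    (hp : MapClusterPt p atTop fun n => F^[n] x₀) :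
    MapClusterPt (F p) atTop fun n => F^[n] x₀ := by
  have hshift : MapClusterPt (F p) atTop fun n => F^[n + 1] x₀ := by
    simpa only [Function.comp_def, Function.iterate_succ_apply'] using
      hp.continuousAt_comp hF.continuousAt
  exact hshift.of_comp (tendsto_add_atTop_nat 1)

theorem not_mapClusterPt_iterate_of_lt_comp (hF : Continuous F) (hV : Continuous V)
    (hVF : ∀ x, V x < V (F x)) (x₀ p : X) : ¬MapClusterPt p atTop fun n => F^[n] x₀ := by
  intro hp
  have hle : ∀ n, V (F^[n] x₀) ≤ V p :=
    (monotone_comp_iterate_of_le_comp (fun x => (hVF x).le) x₀).le_of_mapClusterPt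
      (hp.continuousAt_comp hV.continuousAt)
  have hFp : V (F p) ≤ V p :=
    isClosed_Iic.mem_of_mapClusterPt
      ((hp.apply_iterate hF).continuousAt_comp hV.continuousAt) (.of_forall hle)
  exact (hVF p).not_ge hFp

theorem tendsto_iterate_cocompact_of_lt_comp (hF : Continuous F) (hV : Continuous V)
    (hVF : ∀ x, V x < V (F x)) (x₀ : X) :
    Tendsto (fun n => F^[n] x₀) atTop (cocompact X) := by
  refine hasBasis_cocompact.tendsto_right_iff.2 fun K hK => ?_
  by_contra hnot
  simp only [Set.mem_compl_iff, not_eventually, not_not] at hnot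
  obtain ⟨p, -, hp⟩ := hK.exists_mapClusterPt_of_frequently hnot
  exact not_mapClusterPt_iterate_of_lt_comp hF hV hVF x₀ p hp

end StrictLyapunov

theorem stmt_13 (X : Type*) [NormedAddCommGroup X] [NormedSpace ℝ X]
    [FiniteDimensional ℝ X]
    (F : X → X) (hF : Continuous F) (V : X → ℝ) (hV : Continuous V)
    (hVF : ∀ ξ : X, V (F ξ) > V ξ) :
    ∀ ξ₀ : X, Tendsto (fun n : ℕ => ‖F^[n] ξ₀‖) atTop atTop := fun ξ₀ =>
  tendsto_norm_cocompact_atTop.comp (tendsto_iterate_cocompact_of_lt_comp hF hV hVF ξ₀)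
end

section
/- Assume the homogeneous p-periodic system x' = A(t)x has a nontrivial p-periodic solution. Then the nonhomogeneous system x' = A(t)x + f(t) has a p-periodic solution if and only if ∫₀ᵖ ⟨f(t), z(t)⟩ dt = 0 for every p-periodic solution z of the adjoint system z' = -A(t)ᵀ z. -/
/-!
A solution of `x' = A x + f` is `w - y` with `w` one fixed solution and `y` a solution of the
homogeneous system, so a `p`-periodic solution exists iff `w p - w 0` lies in the subspace
`S = {y p - y 0 | y' = A y}` (periodicity then propagates by uniqueness, as `A` and `f` are
`p`-periodic). In finite dimension `S` is the orthogonal of its orthogonal. The Lagrange identity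
`(x ⬝ᵥ z)' = f ⬝ᵥ z` for solutions `z` of the adjoint system `z' = -Aᵀ z` gives
`∫₀ᵖ f ⬝ᵥ z = x p ⬝ᵥ z p - x 0 ⬝ᵥ z 0`; with `f = 0` it shows that `η ⊥ S` exactly when the adjoint
solution with `z p = η` also has `z 0 = η`, i.e. is periodic. For such `z` the identity turns
`(w p - w 0) ⬝ᵥ η` into `∫₀ᵖ f ⬝ᵥ z`.
-/

open Set Function Matrix intervalIntegral

section AffineODE

variable {E : Type*} [NormedAddCommGroup E] [NormedSpace ℝ E]

theorem ContinuousLinearMap.lipschitzWith_add_const (A : E →L[ℝ] E) (v : E) {K : ℝ}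
    (hK : ‖A‖ ≤ K) : LipschitzWith K.toNNReal (fun x => A x + v) :=
  (A.lipschitz.add (LipschitzWith.const v)).weaken (by simpa using Real.toNNReal_le_toNNReal hK)

theorem exists_eq_forall_mem_Icc_hasDerivWithinAt_affine_of_mul_le [CompleteSpace E]
    {A : ℝ → E →L[ℝ] E} {g : ℝ → E} {c d K G : ℝ} (hcd : c ≤ d)
    (hA : ContinuousOn A (Icc c d)) (hg : ContinuousOn g (Icc c d))
    (hK : ∀ t ∈ Icc c d, ‖A t‖ ≤ K) (hG : ∀ t ∈ Icc c d, ‖g t‖ ≤ G)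
    (hstep : (d - c) * (2 * K + G) ≤ 1) (ξ : E) :
    ∃ x : ℝ → E, x c = ξ ∧
      ∀ t ∈ Icc c d, HasDerivWithinAt x (A t (x t) + g t) (Icc c d) t := by
  have hc : c ∈ Icc c d := left_mem_Icc.mpr hcd
  have hK0 : 0 ≤ K := (norm_nonneg _).trans (hK c hc)
  have hG0 : 0 ≤ G := (norm_nonneg _).trans (hG c hc)
  -- on the ball of radius `‖ξ‖ + 1` the field is bounded by
  -- `K (2‖ξ‖ + 1) + G ≤ (‖ξ‖ + 1) (2K + G)`, so `hstep` is the Picard–Lindelöf time condition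
  have hPL : IsPicardLindelof (fun t x => A t x + g t) (tmin := c) (tmax := d) ⟨c, hc⟩ ξ
      (‖ξ‖₊ + 1) 0 (K.toNNReal * (2 * ‖ξ‖₊ + 1) + G.toNNReal) K.toNNReal := by
    refine ⟨fun t ht => ?_, fun x _ => (hA.clm_apply continuousOn_const).add hg,
      fun t ht x hx => ?_, ?_⟩
    · exact ((A t).lipschitzWith_add_const (g t) (hK t ht)).lipschitzOnWith
    · have hx : ‖x‖ ≤ 2 * ‖ξ‖ + 1 := by
        have := mem_closedBall_iff_norm.mp hx
        push_cast at this
        linarith [norm_le_norm_add_norm_sub' x ξ]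
      push_cast
      rw [Real.coe_toNNReal _ hK0, Real.coe_toNNReal _ hG0]
      calc ‖A t x + g t‖ ≤ ‖A t‖ * ‖x‖ + ‖g t‖ :=
            (norm_add_le _ _).trans (add_le_add_left ((A t).le_opNorm x) _)
        _ ≤ K * (2 * ‖ξ‖ + 1) + G := by
            gcongr
            exacts [hK t ht, hG t ht]
    · simp only [NNReal.coe_add, NNReal.coe_mul, NNReal.coe_one, NNReal.coe_zero, sub_zero,
        Real.coe_toNNReal _ hK0, Real.coe_toNNReal _ hG0, coe_nnnorm, NNReal.coe_ofNat,
        sub_self, max_eq_left (sub_nonneg.mpr hcd)]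
      have hdc := sub_nonneg.mpr hcd
      calc (K * (2 * ‖ξ‖ + 1) + G) * (d - c)
          ≤ (‖ξ‖ + 1) * ((d - c) * (2 * K + G)) := by
            nlinarith [norm_nonneg ξ, mul_nonneg (mul_nonneg hdc hG0) (norm_nonneg ξ)]
        _ ≤ ‖ξ‖ + 1 := mul_le_of_le_one_right (by positivity) hstep
  exact hPL.exists_eq_forall_mem_Icc_hasDerivWithinAt₀

theorem forall_mem_Icc_hasDerivWithinAt_piecewise {F : ℝ → E → E} {a c d : ℝ} {x₁ x₂ : ℝ → E}
    (hac : a ≤ c) (hcd : c ≤ d)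
    (h₁ : ∀ t ∈ Icc a c, HasDerivWithinAt x₁ (F t (x₁ t)) (Icc a c) t)
    (h₂ : ∀ t ∈ Icc c d, HasDerivWithinAt x₂ (F t (x₂ t)) (Icc c d) t) (hc : x₁ c = x₂ c) :
    ∀ t ∈ Icc a d, HasDerivWithinAt ((Iic c).piecewise x₁ x₂)
      (F t ((Iic c).piecewise x₁ x₂ t)) (Icc a d) t := by
  set x := (Iic c).piecewise x₁ x₂
  have e₁ : EqOn x x₁ (Icc a c) := fun s hs => piecewise_eq_of_mem _ _ _ hs.2
  have e₂ : EqOn x x₂ (Icc c d) := fun s hs => by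
    rcases hs.1.eq_or_lt with rfl | hlt
    · exact (piecewise_eq_of_mem _ _ _ (mem_Iic.mpr le_rfl)).trans hc
    · exact piecewise_eq_of_notMem _ _ _ (notMem_Iic.mpr hlt)
  intro t ht
  rw [← Icc_union_Icc_eq_Icc hac hcd]
  refine HasDerivWithinAt.union ?_ ?_
  · by_cases htc : t ≤ c
    · rw [e₁ ⟨ht.1, htc⟩]
      exact (h₁ t ⟨ht.1, htc⟩).congr e₁ (e₁ ⟨ht.1, htc⟩)
    · refine hasDerivWithinAt_iff_hasFDerivWithinAt.mpr (.of_notMem_closure ?_)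
      rw [closure_Icc]
      exact fun h => htc h.2
  · by_cases hct : c ≤ t
    · rw [e₂ ⟨hct, ht.2⟩]
      exact (h₂ t ⟨hct, ht.2⟩).congr e₂ (e₂ ⟨hct, ht.2⟩)
    · refine hasDerivWithinAt_iff_hasFDerivWithinAt.mpr (.of_notMem_closure ?_)
      rw [closure_Icc]
      exact fun h => hct h.1

theorem exists_eq_forall_mem_Icc_hasDerivWithinAt_of_step {F : ℝ → E → E} {a b h : ℝ}
    (hh : 0 < h) (hab : a ≤ b)
    (hstep : ∀ c d, a ≤ c → c ≤ d → d ≤ b → d - c ≤ h → ∀ ξ, ∃ y : ℝ → E, y c = ξ ∧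
      ∀ t ∈ Icc c d, HasDerivWithinAt y (F t (y t)) (Icc c d) t) (ξ : E) :
    ∃ x : ℝ → E, x a = ξ ∧ ∀ t ∈ Icc a b, HasDerivWithinAt x (F t (x t)) (Icc a b) t := by
  suffices H : ∀ k : ℕ, ∀ d ∈ Icc a b, d - a ≤ k * h → ∃ x : ℝ → E, x a = ξ ∧
      ∀ t ∈ Icc a d, HasDerivWithinAt x (F t (x t)) (Icc a d) t by
    obtain ⟨k, hk⟩ := exists_nat_ge ((b - a) / h)
    exact H k b ⟨hab, le_rfl⟩ ((div_le_iff₀ hh).mp hk)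
  intro k
  induction k with
  | zero =>
    intro d hd hda
    exact hstep a d le_rfl hd.1 hd.2 (by push_cast at hda; linarith) ξ
  | succ k ih =>
    intro d hd hda
    by_cases hk : d - a ≤ k * h
    · exact ih d hd hk
    set c := a + k * h
    have hac : a ≤ c := le_add_of_nonneg_right (by positivity)
    have hcd : c ≤ d := by linarith
    obtain ⟨x₁, hx₁a, hx₁⟩ := ih c ⟨hac, hcd.trans hd.2⟩ (by simp [c])
    obtain ⟨x₂, hx₂c, hx₂⟩ := hstep c d hac hcd hd.2 (by push_cast at hda; linarith) (x₁ c)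
    exact ⟨_, by rw [piecewise_eq_of_mem _ _ _ (mem_Iic.mpr hac), hx₁a],
      forall_mem_Icc_hasDerivWithinAt_piecewise hac hcd hx₁ hx₂ hx₂c.symm⟩

variable {A : ℝ → E →L[ℝ] E} {g : ℝ → E}

theorem exists_eq_forall_mem_Icc_hasDerivWithinAt_affine [CompleteSpace E]
    (hA : Continuous A) (hg : Continuous g) {a b : ℝ} (hab : a ≤ b) (ξ : E) :
    ∃ x : ℝ → E, x a = ξ ∧
      ∀ t ∈ Icc a b, HasDerivWithinAt x (A t (x t) + g t) (Icc a b) t := by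
  obtain ⟨K, hK⟩ := isCompact_Icc.exists_bound_of_continuousOn (hA.continuousOn (s := Icc a b))
  obtain ⟨G, hG⟩ := isCompact_Icc.exists_bound_of_continuousOn (hg.continuousOn (s := Icc a b))
  have hK0 : 0 ≤ K := (norm_nonneg _).trans (hK a ⟨le_rfl, hab⟩)
  have hG0 : 0 ≤ G := (norm_nonneg _).trans (hG a ⟨le_rfl, hab⟩)
  have hpos : 0 < 2 * K + G + 1 := by positivity
  refine exists_eq_forall_mem_Icc_hasDerivWithinAt_of_step (F := fun t x => A t x + g t)
    (inv_pos.mpr hpos) hab (fun c d hac hcd hdb hdc => ?_) ξ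
  have hsub : Icc c d ⊆ Icc a b := Icc_subset_Icc hac hdb
  refine exists_eq_forall_mem_Icc_hasDerivWithinAt_affine_of_mul_le hcd hA.continuousOn
    hg.continuousOn (fun t ht => hK t (hsub ht)) (fun t ht => hG t (hsub ht)) ?_
  calc (d - c) * (2 * K + G) ≤ (2 * K + G + 1)⁻¹ * (2 * K + G + 1) :=
        mul_le_mul hdc (by linarith) (by positivity) (by positivity)
    _ = 1 := inv_mul_cancel₀ hpos.ne'

theorem exists_eq_forall_mem_Icc_hasDerivWithinAt_affine_right [CompleteSpace E]
    (hA : Continuous A) (hg : Continuous g) {a b : ℝ} (hab : a ≤ b) (ξ : E) :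
    ∃ x : ℝ → E, x b = ξ ∧
      ∀ t ∈ Icc a b, HasDerivWithinAt x (A t (x t) + g t) (Icc a b) t := by
  obtain ⟨y, hyb, hy⟩ := exists_eq_forall_mem_Icc_hasDerivWithinAt_affine
    (A := fun t => -A (-t)) (g := fun t => -g (-t)) (hA.comp continuous_neg).neg
    (hg.comp continuous_neg).neg (neg_le_neg hab) ξ
  have hneg : MapsTo Neg.neg (Icc a b) (Icc (-b) (-a)) :=
    fun s hs => ⟨neg_le_neg hs.2, neg_le_neg hs.1⟩
  refine ⟨fun t => y (-t), hyb, fun t ht => ?_⟩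
  simpa [Function.comp_def] using
    (hy (-t) (hneg ht)).scomp t (hasDerivAt_neg t).hasDerivWithinAt hneg

theorem exists_eq_forall_mem_Icc_hasDerivWithinAt_affine_of_mem [CompleteSpace E]
    (hA : Continuous A) (hg : Continuous g) {a b t₀ : ℝ} (ht₀ : t₀ ∈ Icc a b) (ξ : E) :
    ∃ x : ℝ → E, x t₀ = ξ ∧
      ∀ t ∈ Icc a b, HasDerivWithinAt x (A t (x t) + g t) (Icc a b) t := by
  obtain ⟨x₁, hx₁, hx₁D⟩ := exists_eq_forall_mem_Icc_hasDerivWithinAt_affine_right hA hg ht₀.1 ξ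
  obtain ⟨x₂, hx₂, hx₂D⟩ := exists_eq_forall_mem_Icc_hasDerivWithinAt_affine hA hg ht₀.2 ξ
  exact ⟨(Iic t₀).piecewise x₁ x₂, by rw [piecewise_eq_of_mem _ _ _ (mem_Iic.mpr le_rfl), hx₁],
    forall_mem_Icc_hasDerivWithinAt_piecewise (F := fun t x => A t x + g t) ht₀.1 ht₀.2
      hx₁D hx₂D (hx₁.trans hx₂.symm)⟩

theorem eqOn_Ioo_of_hasDerivAt_affine (hA : Continuous A) {a b t₀ : ℝ} (ht₀ : t₀ ∈ Ioo a b)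
    {x y : ℝ → E} (hx : ∀ t ∈ Ioo a b, HasDerivAt x (A t (x t) + g t) t)
    (hy : ∀ t ∈ Ioo a b, HasDerivAt y (A t (y t) + g t) t) (h : x t₀ = y t₀) :
    EqOn x y (Ioo a b) := by
  obtain ⟨K, hK⟩ := isCompact_Icc.exists_bound_of_continuousOn (hA.continuousOn (s := Icc a b))
  exact ODE_solution_unique_of_mem_Ioo (s := fun _ => univ)
    (fun t ht =>
      ((A t).lipschitzWith_add_const (g t) (hK t (Ioo_subset_Icc_self ht))).lipschitzOnWith)
    ht₀ (fun t ht => ⟨hx t ht, mem_univ _⟩) (fun t ht => ⟨hy t ht, mem_univ _⟩) h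

theorem eq_of_hasDerivAt_affine (hA : Continuous A) {x y : ℝ → E}
    (hx : ∀ t, HasDerivAt x (A t (x t) + g t) t) (hy : ∀ t, HasDerivAt y (A t (y t) + g t) t)
    {t₀ : ℝ} (h : x t₀ = y t₀) : x = y := by
  funext t
  have ht : t ∈ Ioo (t₀ - (|t - t₀| + 1)) (t₀ + (|t - t₀| + 1)) := by
    constructor <;> linarith [le_abs_self (t - t₀), neg_abs_le (t - t₀)]
  exact eqOn_Ioo_of_hasDerivAt_affine hA (by constructor <;> linarith [abs_nonneg (t - t₀)])
    (fun s _ => hx s) (fun s _ => hy s) h ht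

theorem exists_eq_forall_hasDerivAt_affine [CompleteSpace E] (hA : Continuous A)
    (hg : Continuous g) (t₀ : ℝ) (ξ : E) :
    ∃ x : ℝ → E, x t₀ = ξ ∧ ∀ t, HasDerivAt x (A t (x t) + g t) t := by
  have hloc : ∀ r : ℝ, ∃ γ : ℝ → E, γ t₀ = ξ ∧
      ∀ t ∈ Ioo (t₀ - r) (t₀ + r), HasDerivAt γ (A t (γ t) + g t) t := by
    intro r
    rcases le_or_gt r 0 with hr | hr
    · exact ⟨fun _ => ξ, rfl, fun t ht => absurd (ht.1.trans ht.2) (by linarith)⟩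
    obtain ⟨γ, hγ₀, hγ⟩ := exists_eq_forall_mem_Icc_hasDerivWithinAt_affine_of_mem hA hg
      (show t₀ ∈ Icc (t₀ - r) (t₀ + r) from ⟨by linarith, by linarith⟩) ξ
    exact ⟨γ, hγ₀, fun t ht =>
      (hγ t (Ioo_subset_Icc_self ht)).hasDerivAt (Icc_mem_nhds ht.1 ht.2)⟩
  choose γ hγ₀ hγ using hloc
  have hcompat : ∀ r r' s, |s - t₀| < min r r' → γ r s = γ r' s := by
    intro r r' s hs
    have hpos := (abs_nonneg _).trans_lt hs
    refine eqOn_Ioo_of_hasDerivAt_affine hA (a := t₀ - min r r') (b := t₀ + min r r')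
      ⟨by linarith, by linarith⟩ (fun t ht => hγ r t ?_) (fun t ht => hγ r' t ?_)
      ((hγ₀ r).trans (hγ₀ r').symm) ?_
    · constructor <;> linarith [ht.1, ht.2, min_le_left r r']
    · constructor <;> linarith [ht.1, ht.2, min_le_right r r']
    · rw [abs_lt] at hs; constructor <;> linarith
  refine ⟨fun t => γ (|t - t₀| + 1) t, hγ₀ _, fun t => ?_⟩
  set r := |t - t₀| + 1
  have ht : t ∈ Ioo (t₀ - r) (t₀ + r) := by
    constructor <;> linarith [le_abs_self (t - t₀), neg_abs_le (t - t₀)]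
  have hev : (fun s => γ (|s - t₀| + 1) s) =ᶠ[nhds t] γ r := by
    filter_upwards [Ioo_mem_nhds ht.1 ht.2] with s hs
    refine hcompat _ _ s (lt_min (lt_add_one _) ?_)
    rw [abs_lt]; constructor <;> linarith [hs.1, hs.2]
  exact (hγ r t ht).congr_of_eventuallyEq hev

theorem periodic_of_hasDerivAt_affine (hA : Continuous A) {p : ℝ} (hAp : Periodic A p)
    (hgp : Periodic g p) {x : ℝ → E} (hx : ∀ t, HasDerivAt x (A t (x t) + g t) t) {t₀ : ℝ}
    (h : x (t₀ + p) = x t₀) : Periodic x p := by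
  have hshift : ∀ t, HasDerivAt (fun s => x (s + p)) (A t (x (t + p)) + g t) t := fun t => by
    simpa [hAp t, hgp t] using (hx (t + p)).comp_add_const t p
  exact congrFun (eq_of_hasDerivAt_affine hA hshift hx h)

end AffineODE

section LinearSystems

variable {ι : Type*} [Fintype ι]

theorem Matrix.continuous_toContinuousLinearMap_toLin' [DecidableEq ι] :
    Continuous fun M : Matrix ι ι ℝ => LinearMap.toContinuousLinearMap (Matrix.toLin' M) :=
  (LinearMap.toContinuousLinearMap.toLinearMap ∘ₗ
    (Matrix.toLin' (R := ℝ) (n := ι)).toLinearMap).continuous_of_finiteDimensional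

variable {A : ℝ → Matrix ι ι ℝ} {g : ℝ → ι → ℝ}

theorem exists_eq_forall_hasDerivAt_mulVec_add (hA : Continuous A) (hg : Continuous g)
    (t₀ : ℝ) (ξ : ι → ℝ) :
    ∃ x : ℝ → ι → ℝ, x t₀ = ξ ∧ ∀ t, HasDerivAt x (A t *ᵥ x t + g t) t := by
  classical
  exact exists_eq_forall_hasDerivAt_affine
    (Matrix.continuous_toContinuousLinearMap_toLin'.comp hA) hg t₀ ξ

theorem periodic_of_hasDerivAt_mulVec_add (hA : Continuous A) {p : ℝ} (hAp : Periodic A p)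
    (hgp : Periodic g p) {x : ℝ → ι → ℝ} (hx : ∀ t, HasDerivAt x (A t *ᵥ x t + g t) t)
    {t₀ : ℝ} (h : x (t₀ + p) = x t₀) : Periodic x p := by
  classical
  exact periodic_of_hasDerivAt_affine (Matrix.continuous_toContinuousLinearMap_toLin'.comp hA)
    (hAp.comp _) hgp hx h

theorem HasDerivAt.dotProduct {x z : ℝ → ι → ℝ} {x' z' : ι → ℝ} {t : ℝ}
    (hx : HasDerivAt x x' t) (hz : HasDerivAt z z' t) :
    HasDerivAt (fun s => x s ⬝ᵥ z s) (x' ⬝ᵥ z t + x t ⬝ᵥ z') t := by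
  unfold _root_.dotProduct
  rw [← Finset.sum_add_distrib]
  exact HasDerivAt.fun_sum fun i _ => (hasDerivAt_pi.mp hx i).mul (hasDerivAt_pi.mp hz i)

theorem integral_dotProduct_eq_sub_of_adjoint (hg : Continuous g) {x z : ℝ → ι → ℝ}
    (hx : ∀ t, HasDerivAt x (A t *ᵥ x t + g t) t) (hz : ∀ t, HasDerivAt z (-((A t)ᵀ *ᵥ z t)) t)
    (a b : ℝ) : ∫ t in a..b, g t ⬝ᵥ z t = x b ⬝ᵥ z b - x a ⬝ᵥ z a := by
  have hzc : Continuous z := continuous_iff_continuousAt.mpr fun t => (hz t).continuousAt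
  refine integral_eq_sub_of_hasDerivAt (f := fun t => x t ⬝ᵥ z t) (fun t _ => ?_)
    ((hg.dotProduct hzc).intervalIntegrable a b)
  refine ((hx t).dotProduct (hz t)).congr_deriv ?_
  rw [add_dotProduct, dotProduct_neg, dotProduct_mulVec, vecMul_transpose]
  ring

theorem Submodule.mem_iff_forall_dotProduct_eq_zero {K : Type*} [Field K]
    (W : Submodule K (ι → K)) (b : ι → K) :
    b ∈ W ↔ ∀ η, (∀ u ∈ W, u ⬝ᵥ η = 0) → b ⬝ᵥ η = 0 := by
  classical
  rw [← Subspace.forall_mem_dualAnnihilator_apply_eq_zero_iff,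
    (dotProductEquiv K ι).surjective.forall]
  simp [Submodule.mem_dualAnnihilator, dotProduct_comm]

def homogeneousSolutions (A : ℝ → Matrix ι ι ℝ) : Submodule ℝ (ℝ → ι → ℝ) where
  carrier := {x | ∀ t, HasDerivAt x (A t *ᵥ x t) t}
  zero_mem' t := by simp
  add_mem' hx hy t := by simpa [mulVec_add] using (hx t).add (hy t)
  smul_mem' c x hx t := by simpa [mulVec_smul] using (hx t).const_smul c

theorem exists_periodic_adjoint_of_forall_dotProduct_eq_zero (hA : Continuous A) {p : ℝ}
    (hAp : Periodic A p) {η : ι → ℝ}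
    (hη : ∀ y ∈ homogeneousSolutions A, (y p - y 0) ⬝ᵥ η = 0) :
    ∃ z : ℝ → ι → ℝ, (∀ t, HasDerivAt z (-((A t)ᵀ *ᵥ z t)) t) ∧ Periodic z p ∧ z 0 = η := by
  have hAT : Continuous fun t => -(A t)ᵀ := hA.matrix_transpose.neg
  obtain ⟨z, hzp, hz'⟩ := exists_eq_forall_hasDerivAt_mulVec_add hAT continuous_zero p η
  have hz : ∀ t, HasDerivAt z (-((A t)ᵀ *ᵥ z t)) t := fun t => by
    simpa [neg_mulVec] using hz' t
  have hz0 : z 0 = η := by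
    refine dotProduct_eq _ _ fun ξ => ?_
    obtain ⟨y, hy0, hy⟩ := exists_eq_forall_hasDerivAt_mulVec_add hA continuous_zero 0 ξ
    have hconst := integral_dotProduct_eq_sub_of_adjoint continuous_zero hy hz 0 p
    simp only [Pi.zero_apply, zero_dotProduct, integral_zero, hzp] at hconst
    have hyη := hη y fun t => by simpa using hy t
    rw [sub_dotProduct] at hyη
    rw [dotProduct_comm, ← hy0, dotProduct_comm η]
    linarith
  exact ⟨z, hz, periodic_of_hasDerivAt_mulVec_add hAT (hAp.comp fun M => -Mᵀ) (fun _ => rfl) hz'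
    (t₀ := 0) (by rw [zero_add, hzp, hz0]), hz0⟩

end LinearSystems

theorem stmt_16_general (n : ℕ) (p : ℝ)
    (A : ℝ → Matrix (Fin n) (Fin n) ℝ) (hA : Continuous A)
    (hAp : ∀ t, A (t + p) = A t)
    (f : ℝ → Fin n → ℝ) (hf : Continuous f) (hfp : ∀ t, f (t + p) = f t) :
    (∃ x : ℝ → Fin n → ℝ, (∀ t, HasDerivAt x (A t *ᵥ x t + f t) t) ∧
      ∀ t, x (t + p) = x t) ↔
    (∀ z : ℝ → Fin n → ℝ, (∀ t, HasDerivAt z (-((A t)ᵀ *ᵥ z t)) t) →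
      (∀ t, z (t + p) = z t) → ∫ t in (0:ℝ)..p, f t ⬝ᵥ z t = 0) := by
  constructor
  · rintro ⟨x, hx, hxp⟩ z hz hzp
    rw [integral_dotProduct_eq_sub_of_adjoint hf hx hz, ← zero_add p, hxp, hzp, sub_self]
  · intro h
    obtain ⟨w, -, hw⟩ := exists_eq_forall_hasDerivAt_mulVec_add hA hf 0 0
    have hmem : w p - w 0 ∈ (homogeneousSolutions A).map
        ((LinearMap.proj p : (ℝ → Fin n → ℝ) →ₗ[ℝ] Fin n → ℝ) - LinearMap.proj 0) := by
      refine (Submodule.mem_iff_forall_dotProduct_eq_zero _ _).mpr fun η hη => ?_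
      obtain ⟨z, hz, hzp, hz0⟩ := exists_periodic_adjoint_of_forall_dotProduct_eq_zero hA hAp
        fun y hy => hη _ ⟨y, hy, rfl⟩
      have := h z hz hzp
      rw [integral_dotProduct_eq_sub_of_adjoint hf hw hz, ← zero_add p, hzp, zero_add, hz0] at this
      rwa [sub_dotProduct]
    obtain ⟨y, hy, hyw⟩ := hmem
    have hx : ∀ t, HasDerivAt (w - y) (A t *ᵥ (w - y) t + f t) t := fun t =>
      ((hw t).sub (hy t)).congr_deriv (by rw [Pi.sub_apply, mulVec_sub]; abel)
    refine ⟨w - y, hx, periodic_of_hasDerivAt_mulVec_add hA hAp hfp hx (t₀ := 0) ?_⟩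
    rw [zero_add, Pi.sub_apply, Pi.sub_apply, sub_eq_sub_iff_sub_eq_sub]
    exact hyw.symm

theorem stmt_16 (n : ℕ) (p : ℝ) (hp : 0 < p)
    (A : ℝ → Matrix (Fin n) (Fin n) ℝ) (hA : Continuous A)
    (hAp : ∀ t, A (t + p) = A t)
    (f : ℝ → Fin n → ℝ) (hf : Continuous f) (hfp : ∀ t, f (t + p) = f t)
    (hhom : ∃ x : ℝ → Fin n → ℝ, (∀ t, HasDerivAt x (A t *ᵥ x t) t) ∧
      (∀ t, x (t + p) = x t) ∧ x ≠ 0) :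
    (∃ x : ℝ → Fin n → ℝ, (∀ t, HasDerivAt x (A t *ᵥ x t + f t) t) ∧
      ∀ t, x (t + p) = x t) ↔
    (∀ z : ℝ → Fin n → ℝ, (∀ t, HasDerivAt z (-((A t)ᵀ *ᵥ z t)) t) →
      (∀ t, z (t + p) = z t) → ∫ t in (0:ℝ)..p, f t ⬝ᵥ z t = 0) :=
  stmt_16_general n p A hA hAp f hf hfp
end

section
/- Let B(t) be a continuous n×n matrix-valued function whose off-diagonal entries are positive for all t > 0, and let e_i be the i-th standard basis vector. Then the solution of y' = B(t)y with y(0) = e_i satisfies y_j(t) > 0 for all t > 0 and all j. -/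
/-!
The solution first stays componentwise nonnegative: for `ε > 0` the perturbation
`y + ε e^{(C+1)t}` cannot reach zero on `[0, T]`, where `C` bounds the absolute row sums of `B`
there, because at a first zero of one of its components the nonnegative off-diagonal entries
force that component's derivative to be at least `ε e^{(C+1)t} > 0`.

Then each component satisfies `y_j' = B_jj y_j + g_j` with `g_j = ∑_{k ≠ j} B_jk y_k ≥ 0`, so with
the integrating factor `exp (-∫₀ᵗ B_jj)` the product `y_j exp (-∫₀ᵗ B_jj)` is nondecreasing. Hence
`y_i` stays positive, and then `g_j ≥ B_ji y_i > 0` for `j ≠ i` makes the product strictly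
increasing from `y_j 0 = 0`.
-/

open Matrix Set Filter Topology Real

theorem HasDerivAt.nonpos_of_eventually_le_left {f : ℝ → ℝ} {d b : ℝ} (hd : HasDerivAt f d b)
    (hf : ∀ᶠ s in 𝓝[<] b, f b ≤ f s) : d ≤ 0 := by
  refine le_of_tendsto (hasDerivAt_iff_tendsto_slope_left_right.1 hd).1 ?_
  filter_upwards [hf, self_mem_nhdsWithin] with s hs hsb
  rw [slope_def_field]
  exact div_nonpos_of_nonneg_of_nonpos (sub_nonneg.2 hs) (sub_nonpos.2 (le_of_lt hsb))

theorem pos_on_Icc_of_deriv_pos_at_zeros {ι : Type*} [Finite ι] {w : ℝ → ι → ℝ} {T : ℝ}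
    (hw : ∀ j, ContinuousOn (fun s => w s j) (Icc 0 T)) (hw0 : ∀ j, 0 < w 0 j)
    (hderiv : ∀ s ∈ Ioc 0 T, ∀ j, (∀ k, 0 ≤ w s k) → w s j = 0 →
      ∃ d > 0, HasDerivAt (fun s => w s j) d s) :
    ∀ s ∈ Icc 0 T, ∀ j, 0 < w s j := by
  by_contra! h
  set S := {s ∈ Icc 0 T | ∃ j, w s j ≤ 0}
  have hS : IsCompact S := by
    refine isCompact_Icc.of_isClosed_subset ?_ (sep_subset _ _)
    have hSeq : S = ⋃ j, Icc 0 T ∩ (fun s => w s j) ⁻¹' Iic 0 := by ext; simp [S]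
    rw [hSeq]
    exact isClosed_iUnion_of_finite fun j =>
      (hw j).preimage_isClosed_of_isClosed isClosed_Icc isClosed_Iic
  obtain ⟨s, hs, j, hj⟩ := h
  obtain ⟨τ, ⟨hτT, j, hj⟩, hτmin⟩ := hS.exists_isLeast ⟨s, hs, j, hj⟩
  have hτ0 : 0 < τ := hτT.1.lt_of_ne fun h => (hw0 j).not_ge (h ▸ hj)
  have hbefore : ∀ s ∈ Ico 0 τ, ∀ k, 0 < w s k := fun s hs k => by
    by_contra! hk
    exact (hτmin ⟨⟨hs.1, hs.2.le.trans hτT.2⟩, k, hk⟩).not_gt hs.2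
  have hτnonneg : ∀ k, 0 ≤ w τ k := fun k =>
    ContinuousWithinAt.closure_le (f := fun _ => 0) (g := fun s => w s k)
      (by rw [closure_Ico hτ0.ne]; exact right_mem_Icc.2 hτ0.le) continuousWithinAt_const
      ((hw k τ hτT).mono (Ico_subset_Icc_self.trans (Icc_subset_Icc_right hτT.2)))
      fun s hs => (hbefore s hs k).le
  have hτj : w τ j = 0 := le_antisymm hj (hτnonneg j)
  obtain ⟨d, hd, hderiv⟩ := hderiv τ ⟨hτ0, hτT.2⟩ j hτnonneg hτj
  refine hd.not_ge (hderiv.nonpos_of_eventually_le_left ?_)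
  filter_upwards [Ico_mem_nhdsLT hτ0] with s hs
  rw [hτj]
  exact (hbefore s hs j).le

section Metzler

variable {ι : Type*} [Fintype ι]

theorem neg_sum_abs_mul_le_mulVec_apply (A : Matrix ι ι ℝ) {v : ι → ℝ} {c : ℝ} {j : ι}
    (hoff : ∀ k, k ≠ j → 0 ≤ A j k) (hc : 0 ≤ c) (hv : ∀ k, -c ≤ v k) (hvj : v j = -c) :
    -((∑ k, |A j k|) * c) ≤ (A *ᵥ v) j := by
  change _ ≤ ∑ k, A j k * v k
  rw [Finset.sum_mul, ← Finset.sum_neg_distrib]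
  refine Finset.sum_le_sum fun k _ => ?_
  rcases eq_or_ne k j with rfl | hkj
  · rw [hvj]
    nlinarith [le_abs_self (A k k)]
  · calc -(|A j k| * c) = A j k * -c := by rw [abs_of_nonneg (hoff k hkj)]; ring
      _ ≤ A j k * v k := mul_le_mul_of_nonneg_left (hv k) (hoff k hkj)

theorem exists_sum_abs_le_on_Icc {B : ℝ → Matrix ι ι ℝ} (hB : Continuous B) (a b : ℝ) :
    ∃ C, ∀ s ∈ Icc a b, ∀ j, ∑ k, |B s j k| ≤ C := by
  have hg : Continuous fun s => ∑ j, ∑ k, |B s j k| := by fun_prop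
  obtain ⟨C, hC⟩ := isCompact_Icc.bddAbove_image hg.continuousOn
  refine ⟨C, fun s hs j => ?_⟩
  calc ∑ k, |B s j k| ≤ ∑ j, ∑ k, |B s j k| :=
        Finset.single_le_sum (f := fun j => ∑ k, |B s j k|) (fun j _ => by positivity)
          (Finset.mem_univ j)
    _ ≤ C := hC (mem_image_of_mem _ hs)

theorem nonneg_of_hasDerivAt_mulVec {B : ℝ → Matrix ι ι ℝ} (hB : Continuous B)
    (hoff : ∀ t > 0, ∀ j k, j ≠ k → 0 ≤ B t j k) {y : ℝ → ι → ℝ}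
    (hy : ∀ t, HasDerivAt y (B t *ᵥ y t) t) (hy0 : 0 ≤ y 0) :
    ∀ t ≥ 0, 0 ≤ y t := by
  intro T hT j
  obtain ⟨C, hC⟩ := exists_sum_abs_le_on_Icc hB 0 T
  have hyj : ∀ j s, HasDerivAt (fun s => y s j) ((B s *ᵥ y s) j) s :=
    fun j s => hasDerivAt_pi.1 (hy s) j
  have hperturbed : ∀ ε > 0, ∀ s ∈ Icc 0 T, ∀ j, 0 < y s j + ε * exp ((C + 1) * s) := by
    intro ε hε
    refine pos_on_Icc_of_deriv_pos_at_zeros (w := fun s j => y s j + ε * exp ((C + 1) * s))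
      (fun j s _ => ?_) (fun j => ?_) ?_
    · exact ((hyj j s).continuousAt.add (by fun_prop)).continuousWithinAt
    · simpa using add_pos_of_nonneg_of_pos (hy0 j) hε
    · intro s hs j hnonneg hzero
      have hc : 0 < ε * exp ((C + 1) * s) := by positivity
      have hrow := neg_sum_abs_mul_le_mulVec_apply (B s) (v := y s)
        (fun k hkj => hoff s hs.1 j k hkj.symm) hc.le (fun k => by linarith [hnonneg k])
        (eq_neg_of_add_eq_zero_left hzero)
      have hCs := hC s (Ioc_subset_Icc_self hs) j
      have hE : HasDerivAt (fun s => ε * exp ((C + 1) * s))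
          (ε * (exp ((C + 1) * s) * (C + 1))) s := by
        simpa using (((hasDerivAt_id' s).const_mul (C + 1)).exp).const_mul ε
      refine ⟨_, ?_, (hyj j s).fun_add hE⟩
      nlinarith
  refine le_of_forall_pos_lt_add fun δ hδ => ?_
  have h := hperturbed (δ / exp ((C + 1) * T)) (by positivity) T ⟨hT, le_rfl⟩ j
  rwa [div_mul_cancel₀ _ (exp_pos _).ne'] at h

theorem hasDerivAt_apply_of_hasDerivAt_mulVec [DecidableEq ι] {B : ℝ → Matrix ι ι ℝ}
    {y : ℝ → ι → ℝ} (hy : ∀ t, HasDerivAt y (B t *ᵥ y t) t) (j : ι) (t : ℝ) :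
    HasDerivAt (fun s => y s j)
      (B t j j * y t j + ∑ k ∈ Finset.univ.erase j, B t j k * y t k) t := by
  rw [Finset.add_sum_erase _ (fun k => B t j k * y t k) (Finset.mem_univ j)]
  exact hasDerivAt_pi.1 (hy t) j

end Metzler

section IntegratingFactor

variable {a f g : ℝ → ℝ}

theorem hasDerivAt_mul_exp_neg_integral (ha : Continuous a)
    (hf : ∀ s, HasDerivAt f (a s * f s + g s) s) (s : ℝ) :
    HasDerivAt (fun s => f s * exp (-∫ r in (0)..s, a r)) (g s * exp (-∫ r in (0)..s, a r)) s := by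
  have hE : HasDerivAt (fun s => exp (-∫ r in (0)..s, a r))
      (exp (-∫ r in (0)..s, a r) * -a s) s :=
    (ha.integral_hasStrictDerivAt 0 s).hasDerivAt.fun_neg.exp
  exact ((hf s).mul hE).congr_deriv (by ring)

theorem pos_of_hasDerivAt_mul_add_of_pos_initial (ha : Continuous a)
    (hf : ∀ s, HasDerivAt f (a s * f s + g s) s)
    (hg : ∀ s > 0, 0 ≤ g s) (hf0 : 0 < f 0) : ∀ t ≥ 0, 0 < f t := by
  intro t ht
  have hmono : MonotoneOn (fun s => f s * exp (-∫ r in (0)..s, a r)) (Ici 0) :=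
    monotoneOn_of_hasDerivWithinAt_nonneg (convex_Ici 0)
      (fun s _ => (hasDerivAt_mul_exp_neg_integral ha hf s).continuousAt.continuousWithinAt)
      (fun s _ => (hasDerivAt_mul_exp_neg_integral ha hf s).hasDerivWithinAt)
      (fun s hs => mul_nonneg (hg s (interior_Ici.subset hs)) (exp_pos _).le)
  have h := hmono self_mem_Ici ht ht
  simp only [intervalIntegral.integral_same, neg_zero, exp_zero, mul_one] at h
  exact (mul_pos_iff_of_pos_right (exp_pos _)).1 (hf0.trans_le h)

theorem pos_of_hasDerivAt_mul_add_of_pos_forcing (ha : Continuous a)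
    (hf : ∀ s, HasDerivAt f (a s * f s + g s) s) (hg : ∀ s > 0, 0 < g s) (hf0 : 0 ≤ f 0) :
    ∀ t > 0, 0 < f t := by
  intro t ht
  have hmono : StrictMonoOn (fun s => f s * exp (-∫ r in (0)..s, a r)) (Ici 0) :=
    strictMonoOn_of_hasDerivWithinAt_pos (convex_Ici 0)
      (fun s _ => (hasDerivAt_mul_exp_neg_integral ha hf s).continuousAt.continuousWithinAt)
      (fun s _ => (hasDerivAt_mul_exp_neg_integral ha hf s).hasDerivWithinAt)
      (fun s hs => mul_pos (hg s (interior_Ici.subset hs)) (exp_pos _))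
  have h := hmono self_mem_Ici ht.le ht
  simp only [intervalIntegral.integral_same, neg_zero, exp_zero, mul_one] at h
  exact (mul_pos_iff_of_pos_right (exp_pos _)).1 (hf0.trans_lt h)

end IntegratingFactor

theorem stmt_17_general (n : ℕ)
    (B : ℝ → Matrix (Fin n) (Fin n) ℝ) (hB : Continuous B)
    (hoff : ∀ t > (0:ℝ), ∀ j k : Fin n, j ≠ k → 0 < B t j k)
    (i : Fin n)
    (y : ℝ → Fin n → ℝ) (hy : ∀ t, HasDerivAt y (B t *ᵥ y t) t)
    (hy0 : y 0 = Pi.single i 1) :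
    ∀ t > (0:ℝ), ∀ j : Fin n, 0 < y t j := by
  have hdiag : ∀ j, Continuous fun t => B t j j := fun j => by fun_prop
  have hyj := hasDerivAt_apply_of_hasDerivAt_mulVec hy
  have hnonneg := nonneg_of_hasDerivAt_mulVec hB (fun t ht j k hjk => (hoff t ht j k hjk).le) hy
    (hy0 ▸ Pi.single_nonneg.2 zero_le_one)
  have hterm : ∀ s > 0, ∀ j, ∀ k ∈ Finset.univ.erase j, 0 ≤ B s j k * y s k := fun s hs j k hk =>
    mul_nonneg (hoff s hs j k (Finset.ne_of_mem_erase hk).symm).le (hnonneg s hs.le k)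
  have hyi : ∀ t ≥ 0, 0 < y t i :=
    pos_of_hasDerivAt_mul_add_of_pos_initial (hdiag i) (hyj i)
      (fun s hs => Finset.sum_nonneg (hterm s hs i)) (by simp [hy0])
  intro t ht j
  rcases eq_or_ne j i with rfl | hji
  · exact hyi t ht.le
  refine pos_of_hasDerivAt_mul_add_of_pos_forcing (hdiag j) (hyj j)
    (fun s hs => ?_) (hnonneg 0 le_rfl j) t ht
  exact Finset.sum_pos' (hterm s hs j) ⟨i, Finset.mem_erase.2 ⟨hji.symm, Finset.mem_univ i⟩,
    mul_pos (hoff s hs j i hji) (hyi s hs.le)⟩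

theorem stmt_17 (n : ℕ) (hn : 2 ≤ n)
    (B : ℝ → Matrix (Fin n) (Fin n) ℝ) (hB : Continuous B)
    (hoff : ∀ t > (0:ℝ), ∀ j k : Fin n, j ≠ k → 0 < B t j k)
    (i : Fin n)
    (y : ℝ → Fin n → ℝ) (hy : ∀ t, HasDerivAt y (B t *ᵥ y t) t)
    (hy0 : y 0 = Pi.single i 1) :
    ∀ t > (0:ℝ), ∀ j : Fin n, 0 < y t j :=
  stmt_17_general n B hB hoff i y hy hy0
end

section
/- Let h : ℝ → ℝ be continuous and p-periodic, μ ∈ ℝ. If w : ℝ → ℝ is differentiable, p-periodic, has zero average ∫₀ᵖ w = 0, and satisfies w'(t) + h(t)w(t) = μ for all t, then μ = 0 and w ≡ 0. -/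
open intervalIntegral

/-
Since `∫₀ᵖ w = 0`, the mean value theorem for integrals gives a zero `t₀` of `w`. With the
integrating factor `E(t) = exp ∫₀ᵗ h`, the equation becomes `(E w)' = μ E`. Now `E w` vanishes at
`t₀` and, by periodicity of `w`, at `t₀ + p`, so Rolle's theorem yields `μ E(c) = 0`, i.e. `μ = 0`.
Then `E w` is constant, equal to its value `0` at `t₀`, and `E > 0` forces `w ≡ 0`.
-/

open Set in
theorem exists_eq_zero_of_intervalIntegral_eq_zero {f : ℝ → ℝ} {a b : ℝ} (hab : a ≠ b)
    (hf : ContinuousOn f (uIcc a b)) (hf₀ : ∫ t in a..b, f t = 0) : ∃ c ∈ uIoo a b, f c = 0 := by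
  obtain ⟨c, hc, hfc⟩ := exists_eq_interval_average hab hf
  exact ⟨c, hc, by rw [hfc, interval_average_eq_div, hf₀, zero_div]⟩

theorem hasDerivAt_exp_integral_mul {h w : ℝ → ℝ} (hh : Continuous h) (a : ℝ) {t f : ℝ}
    (hw : HasDerivAt w (f - h t * w t) t) :
    HasDerivAt (fun s => Real.exp (∫ u in a..s, h u) * w s)
      (Real.exp (∫ u in a..t, h u) * f) t := by
  have hH : HasDerivAt (fun s => ∫ u in a..s, h u) (h t) t :=
    integral_hasDerivAt_right (hh.intervalIntegrable _ _)
      hh.stronglyMeasurable.stronglyMeasurableAtFilter hh.continuousAt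
  exact (hH.exp.mul hw).congr_deriv (by ring)

theorem stmt_19_general (p : ℝ) (hp : 0 < p) (h : ℝ → ℝ) (hh : Continuous h)
    (μ : ℝ)
    (w : ℝ → ℝ) (hw : ∀ t, HasDerivAt w (μ - h t * w t) t)
    (hwp : ∀ t, w (t + p) = w t) (hwavg : ∫ t in (0:ℝ)..p, w t = 0) :
    μ = 0 ∧ ∀ t, w t = 0 := by
  have hwc : Continuous w := continuous_iff_continuousAt.2 fun t => (hw t).continuousAt
  obtain ⟨t₀, -, hwt₀⟩ :=
    exists_eq_zero_of_intervalIntegral_eq_zero hp.ne hwc.continuousOn hwavg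
  set E : ℝ → ℝ := fun t => Real.exp (∫ u in (0:ℝ)..t, h u)
  set g : ℝ → ℝ := fun t => E t * w t
  have hg : ∀ t, HasDerivAt g (E t * μ) t := fun t => hasDerivAt_exp_integral_mul hh 0 (hw t)
  have hgt₀ : g t₀ = 0 := by simp [g, hwt₀]
  have hμ : μ = 0 := by
    obtain ⟨c, -, hc⟩ := exists_hasDerivAt_eq_zero (f := g) (a := t₀) (b := t₀ + p) (by linarith)
      (HasDerivAt.continuousOn fun t _ => hg t) (by simp [g, hwp, hwt₀]) fun t _ => hg t
    exact (mul_eq_zero.1 hc).resolve_left (Real.exp_pos _).ne'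
  refine ⟨hμ, fun t => ?_⟩
  have hgt : g t = g t₀ :=
    is_const_of_deriv_eq_zero (fun x => (hg x).differentiableAt)
      (fun x => by rw [(hg x).deriv, hμ, mul_zero]) t t₀
  rw [hgt₀] at hgt
  exact (mul_eq_zero.1 hgt).resolve_left (Real.exp_pos _).ne'

theorem stmt_19 (p : ℝ) (hp : 0 < p) (h : ℝ → ℝ) (hh : Continuous h)
    (hhp : ∀ t, h (t + p) = h t) (μ : ℝ)
    (w : ℝ → ℝ) (hw : ∀ t, HasDerivAt w (μ - h t * w t) t)
    (hwp : ∀ t, w (t + p) = w t) (hwavg : ∫ t in (0:ℝ)..p, w t = 0) :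
    μ = 0 ∧ ∀ t, w t = 0 :=
  stmt_19_general p hp h hh μ w hw hwp hwavg
end
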